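/- arXiv:2303.16321 — 3 statements merged into one kernel-verified Lean document; each statement's English description precedes it below -/
import Mathlib

section
/- Let S_t = σ_t(M_t) be an information state with cost distribution ρ and let Λ^∞ be the unique fixed point of the operator 𝒯. Then for every initial observation y_0 ∈ 𝒴: Λ^∞(σ_0(y_0), 1) = V_0(y_0), i.e., the fixed point of the time-invariant information-state dynamic program equals the optimal value function of the infinite-horizon worst-case discounted cost problem. -/
open Set Filter

noncomputable section

/-- Hausdorff distance built from an arbitrary distance function `η`,
`ℋ(A,B) = max{sup_{a∈A} inf_{b∈B} η a b, sup_{b∈B} inf_{a∈A} η a b}`. -/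
def hausd {α : Type*} (η : α → α → ℝ) (A B : Set α) : ℝ :=
  max (sSup ((fun a => sInf ((fun b => η a b) '' B)) '' A))
      (sSup ((fun b => sInf ((fun a => η a b) '' A)) '' B))

/-- The time-invariant DP operator `𝒯` for general information states:
`[𝒯Λ](s,z) = inf_u sup_{c,s'} (c + γ·Λ(s',γz) + ρ(c,s'|s,u)/z)`, the sup being over the
support of the cost distribution `ρ` (off the support `ρ = −∞`). -/
def DPop {Ss Uu : Type*} (γ : ℝ) (ρ : ℝ → Ss → Ss → Uu → EReal)
    (Λ : Ss → ℝ → ℝ) (s : Ss) (z : ℝ) : ℝ :=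
  sInf (Set.range fun u : Uu => sSup ((fun p : ℝ × Ss =>
    p.1 + γ * Λ p.2 (γ * z) + (ρ p.1 p.2 s u).toReal / z) '' {p | ρ p.1 p.2 s u ≠ ⊥}))

/-- Iterates `Λ^n = 𝒯^n Λ^0` starting from `Λ^0 ≡ 0`. -/
def DPopIter {Ss Uu : Type*} (γ : ℝ) (ρ : ℝ → Ss → Ss → Uu → EReal) : ℕ → Ss → ℝ → ℝ
  | 0 => fun _ _ => 0
  | (n+1) => DPop γ ρ (DPopIter γ ρ n)

/-- The law-dependent operator `𝒯(π)`. -/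
def DPopLaw {Ss Uu : Type*} (γ : ℝ) (ρ : ℝ → Ss → Ss → Uu → EReal) (π : Ss → ℝ → Uu)
    (Λ : Ss → ℝ → ℝ) (s : Ss) (z : ℝ) : ℝ :=
  sSup ((fun p : ℝ × Ss =>
    p.1 + γ * Λ p.2 (γ * z) + (ρ p.1 p.2 s (π s z)).toReal / z) '' {p | ρ p.1 p.2 s (π s z) ≠ ⊥})

/-- Iterates `𝒯(π)^n Λ^0` starting from `Λ^0 ≡ 0`. -/
def DPopLawIter {Ss Uu : Type*} (γ : ℝ) (ρ : ℝ → Ss → Ss → Uu → EReal) (π : Ss → ℝ → Uu) :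
    ℕ → Ss → ℝ → ℝ
  | 0 => fun _ _ => 0
  | (n+1) => DPopLaw γ ρ π (DPopLawIter γ ρ π n)

/-- The time-invariant DP operator `𝒯̄` for problems with observable costs:
`[𝒯̄Λ̄](s̄) = inf_u sup_{(c,s̄') ∈ F(s̄,u)} (c + γ·Λ̄(s̄'))` where `F s̄ u = [[C, S̄' | s̄, u]]`. -/
def DPopB {Sb Uu : Type*} (γ : ℝ) (F : Sb → Uu → Set (ℝ × Sb)) (Λ : Sb → ℝ) (s : Sb) : ℝ :=
  sInf (Set.range fun u : Uu => sSup ((fun p : ℝ × Sb => p.1 + γ * Λ p.2) '' F s u))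

/-- Iterates `Λ̄^n = 𝒯̄^n Λ̄^0` starting from `Λ̄^0 ≡ 0`. -/
def DPopBIter {Sb Uu : Type*} (γ : ℝ) (F : Sb → Uu → Set (ℝ × Sb)) : ℕ → Sb → ℝ
  | 0 => fun _ => 0
  | (n+1) => DPopB γ F (DPopBIter γ F n)

/-- The law-dependent observable-cost operator. -/
def DPopBLaw {Sb Uu : Type*} (γ : ℝ) (F : Sb → Uu → Set (ℝ × Sb)) (π : Sb → Uu)
    (Λ : Sb → ℝ) (s : Sb) : ℝ :=
  sSup ((fun p : ℝ × Sb => p.1 + γ * Λ p.2) '' F s (π s))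

/-- `β_t(T)` error coefficients, fuel-indexed: `beta γ e k t = β_t(t+k)` with
`β_T(T) = γ^T·e` and `β_t(T) = β_{t+1}(T) + γ^t·e`. -/
def beta (γ e : ℝ) : ℕ → ℕ → ℝ
  | 0, t => γ ^ t * e
  | (k+1), t => beta γ e k (t+1) + γ ^ t * e

/-- A partially observed non-stochastic input–output system with bounded costs:
disturbances `W_t ∈ 𝒲`, actions `U_t ∈ 𝒰`, observations `Y_0 = h_0(W_0)`,
`Y_{t+1} = h_{t+1}(W_{0:t}, U_{0:t})`, and costs `C_t = d_t(W_{0:t}, U_{0:t}) ∈ 𝒞 ⊆ [cmin, cmax] ⊂ ℝ≥0`,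
with a discount factor `γ ∈ (0,1)`. -/
structure Sys where
  W : Type
  U : Type
  Y : Type
  [hW : Nonempty W]
  [hU : Nonempty U]
  [hY : Nonempty Y]
  γ : ℝ
  cmin : ℝ
  cmax : ℝ
  h0 : W → Y
  h : (t : ℕ) → (Fin (t+1) → W) → (Fin (t+1) → U) → Y
  d : (t : ℕ) → (Fin (t+1) → W) → (Fin (t+1) → U) → ℝ
  hγ0 : 0 < γ
  hγ1 : γ < 1
  hcmin : 0 ≤ cmin
  hcost : ∀ t ω υ, d t ω υ ∈ Set.Icc cmin cmax

attribute [instance] Sys.hW Sys.hU Sys.hY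

namespace Sys

variable (S : Sys)

/-- `a^max = c^max/(1-γ)`. -/
def amax : ℝ := S.cmax / (1 - S.γ)

/-- Memory space at time `t`: `M_t = (Y_{0:t}, U_{0:t-1})`. -/
abbrev Mem (t : ℕ) : Type := (Fin (t+1) → S.Y) × (Fin t → S.U)

/-- Control strategies `g = (g_0, g_1, …)`, `U_t = g_t(M_t)`. -/
abbrev Strat : Type := (t : ℕ) → S.Mem t → S.U

/-- The memory realization at time `0` generated by an initial observation `y_0`. -/
def mem0 (y : S.Y) : S.Mem 0 := (fun _ => y, Fin.elim0)

/-- Open-loop observation `Y_s` generated by disturbances `ω` and actions `u_{0:s-1}`. -/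
def oy (ω : ℕ → S.W) : (s : ℕ) → (Fin s → S.U) → S.Y
  | 0, _ => S.h0 (ω 0)
  | (t+1), υ => S.h t (fun i : Fin (t+1) => ω i) υ

/-- Open-loop cost `C_t` generated by disturbances `ω` and actions `u_{0:t}`. -/
def oc (ω : ℕ → S.W) (t : ℕ) (υ : Fin (t+1) → S.U) : ℝ :=
  S.d t (fun i : Fin (t+1) => ω i) υ

/-- Open-loop accrued cost `A_t = Σ_{ℓ<t} γ^ℓ C_ℓ`. -/
def oA (ω : ℕ → S.W) (t : ℕ) (υ : Fin t → S.U) : ℝ :=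
  ∑ ℓ : Fin t, S.γ ^ (ℓ : ℕ) *
    S.oc ω ℓ (fun j : Fin ((ℓ : ℕ) + 1) => υ ⟨j, by have := j.isLt; have := ℓ.isLt; omega⟩)

/-- Open-loop memory at time `t` generated by disturbances `ω` and actions `u_{0:t-1}`. -/
def omem (ω : ℕ → S.W) (t : ℕ) (υ : Fin t → S.U) : S.Mem t :=
  (fun i : Fin (t+1) =>
    S.oy ω i (fun j : Fin (i : ℕ) => υ ⟨j, by have := j.isLt; have := i.isLt; omega⟩), υ)

/-- Disturbance realizations consistent with the memory realization `m_t`. -/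
def consistent (t : ℕ) (m : S.Mem t) : Set (ℕ → S.W) := {ω | S.omem ω t m.2 = m}

/-- `[[A_t | m_t]]`, the conditional range of the accrued cost. -/
def Arange (t : ℕ) (m : S.Mem t) : Set ℝ :=
  (fun ω => S.oA ω t m.2) '' S.consistent t m

/-- Closed-loop memory `M_t` generated by strategy `g` and disturbances `ω`. -/
def memOf (g : S.Strat) (ω : ℕ → S.W) : (t : ℕ) → S.Mem t
  | 0 => (fun _ => S.h0 (ω 0), Fin.elim0)
  | (t+1) =>
    let m := memOf g ω t
    let us : Fin (t+1) → S.U := Fin.snoc m.2 (g t m)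
    (Fin.snoc m.1 (S.h t (fun i : Fin (t+1) => ω i) us), us)

/-- Closed-loop action `U_t = g_t(M_t)`. -/
def act (g : S.Strat) (ω : ℕ → S.W) (t : ℕ) : S.U := g t (S.memOf g ω t)

/-- Closed-loop cost `C_t`. -/
def ccost (g : S.Strat) (ω : ℕ → S.W) (t : ℕ) : ℝ :=
  S.d t (fun i : Fin (t+1) => ω i) (fun i : Fin (t+1) => S.act g ω i)

/-- Closed-loop accrued cost `A_t = Σ_{ℓ<t} γ^ℓ C_ℓ`. -/
def cA (g : S.Strat) (ω : ℕ → S.W) (t : ℕ) : ℝ :=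
  ∑ ℓ ∈ Finset.range t, S.γ ^ ℓ * S.ccost g ω ℓ

/-- Closed-loop cost-to-go `C_t^∞ = Σ_{ℓ≥t} γ^{ℓ-t} C_ℓ`. -/
def cCinf (g : S.Strat) (ω : ℕ → S.W) (t : ℕ) : ℝ :=
  ∑' k : ℕ, S.γ ^ k * S.ccost g ω (t + k)

/-- Strategy value function
`V_t^g(m_t) = sup_{(a,c^∞) ∈ [[A_t, C_t^∞ | m_t]]^g} (a + γ^t c^∞)`. -/
def V (g : S.Strat) (t : ℕ) (m : S.Mem t) : ℝ :=
  sSup ((fun ω => S.cA g ω t + S.γ ^ t * S.cCinf g ω t) '' {ω | S.memOf g ω t = m})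

/-- Optimal value function `V_t(m_t) = inf_g V_t^g(m_t)`
(the infimum over strategies consistent with the realization `m_t`). -/
def Vopt (t : ℕ) (m : S.Mem t) : ℝ :=
  sInf ((fun g => S.V g t m) '' {g : S.Strat | ∃ ω, S.memOf g ω t = m})

/-- Strategy-dependent finite-horizon function, fuel-indexed:
`Jg g n t m = J_t^g(m_t; t+n)` with `J_T^g(m_T;T) = sup_{[[A_T,C_T|m_T]]^g}(a_T + γ^T c_T)` and
`J_t^g(m_t;T) = sup_{m_{t+1} ∈ [[M_{t+1}|m_t]]^g} J_{t+1}^g(m_{t+1};T)`. -/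
def Jg (g : S.Strat) : ℕ → (t : ℕ) → S.Mem t → ℝ
  | 0, t, m => sSup ((fun ω => S.cA g ω t + S.γ ^ t * S.ccost g ω t) '' {ω | S.memOf g ω t = m})
  | (n+1), t, m =>
    sSup ((fun ω => Jg g n (t+1) (S.memOf g ω (t+1))) '' {ω | S.memOf g ω t = m})

/-- Optimal finite-horizon function, fuel-indexed: `Jopt n t m = J_t(m_t; t+n)` with
`J_T(m_T;T) = inf_{u_T} sup_{[[A_T,C_T|m_T,u_T]]}(a_T + γ^T c_T)` and
`J_t(m_t;T) = inf_{u_t} sup_{m_{t+1} ∈ [[M_{t+1}|m_t,u_t]]} J_{t+1}(m_{t+1};T)`. -/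
def Jopt : ℕ → (t : ℕ) → S.Mem t → ℝ
  | 0, t, m => sInf (Set.range fun u : S.U =>
      sSup ((fun ω => S.oA ω t m.2 + S.γ ^ t * S.oc ω t (Fin.snoc m.2 u)) '' S.consistent t m))
  | (n+1), t, m => sInf (Set.range fun u : S.U =>
      sSup ((fun ω => Jopt n (t+1) (S.omem ω (t+1) (Fin.snoc m.2 u))) '' S.consistent t m))

/-- The conditional accrued distribution `r_t((c,s) | m_t, u_t)` of the pair
`(C_t, S_{t+1})` where `S_{t+1} = σ_{t+1}(M_{t+1})`:
`r_t(x|y) = sup_{a ∈ [0,a^max]}(a + 𝕀(x,a|y)) − sup_{a ∈ [0,a^max]}(a + 𝕀(a|y))` in `ℝ ∪ {−∞}`. -/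
def rcs {Ss : Type*} (σ : (t : ℕ) → S.Mem t → Ss) (t : ℕ) (c : ℝ) (s : Ss)
    (m : S.Mem t) (u : S.U) : EReal :=
  sSup ((fun a : ℝ => (a : EReal)) '' {a | a ∈ Set.Icc 0 S.amax ∧ ∃ ω ∈ S.consistent t m,
      S.oc ω t (Fin.snoc m.2 u) = c ∧ σ (t+1) (S.omem ω (t+1) (Fin.snoc m.2 u)) = s ∧
      S.oA ω t m.2 = a}) -
  sSup ((fun a : ℝ => (a : EReal)) '' {a | a ∈ Set.Icc 0 S.amax ∧ ∃ ω ∈ S.consistent t m,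
      S.oA ω t m.2 = a})

/-! ### Observable costs -/

/-- Memory space with observable costs: `M_t = (Y_{0:t}, C_{0:t-1}, U_{0:t-1})`. -/
abbrev MemO (t : ℕ) : Type := (Fin (t+1) → S.Y) × (Fin t → ℝ) × (Fin t → S.U)

/-- Strategies for the observable-cost problem. -/
abbrev StratO : Type := (t : ℕ) → S.MemO t → S.U

/-- The observable-cost memory realization at time `0` from an initial observation. -/
def memO0 (y : S.Y) : S.MemO 0 := (fun _ => y, Fin.elim0, Fin.elim0)

/-- Open-loop observable-cost memory generated by `ω` and actions `u_{0:t-1}`. -/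
def omemO (ω : ℕ → S.W) (t : ℕ) (υ : Fin t → S.U) : S.MemO t :=
  (fun i : Fin (t+1) =>
      S.oy ω i (fun j : Fin (i : ℕ) => υ ⟨j, by have := j.isLt; have := i.isLt; omega⟩),
   fun ℓ : Fin t =>
      S.oc ω ℓ (fun j : Fin ((ℓ : ℕ) + 1) => υ ⟨j, by have := j.isLt; have := ℓ.isLt; omega⟩),
   υ)

/-- Disturbances consistent with an observable-cost memory realization. -/
def consistentO (t : ℕ) (m : S.MemO t) : Set (ℕ → S.W) := {ω | S.omemO ω t m.2.2 = m}

/-- `[[A_t | m_t]]` for the observable-cost problem. -/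
def ArangeO (t : ℕ) (m : S.MemO t) : Set ℝ :=
  (fun ω => S.oA ω t m.2.2) '' S.consistentO t m

/-- Closed-loop observable-cost memory. -/
def memOfO (g : S.StratO) (ω : ℕ → S.W) : (t : ℕ) → S.MemO t
  | 0 => (fun _ => S.h0 (ω 0), Fin.elim0, Fin.elim0)
  | (t+1) =>
    let m := memOfO g ω t
    let us : Fin (t+1) → S.U := Fin.snoc m.2.2 (g t m)
    (Fin.snoc m.1 (S.h t (fun i : Fin (t+1) => ω i) us),
     Fin.snoc m.2.1 (S.d t (fun i : Fin (t+1) => ω i) us), us)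

/-- Closed-loop action for the observable-cost problem. -/
def actO (g : S.StratO) (ω : ℕ → S.W) (t : ℕ) : S.U := g t (S.memOfO g ω t)

/-- Closed-loop cost for the observable-cost problem. -/
def ccostO (g : S.StratO) (ω : ℕ → S.W) (t : ℕ) : ℝ :=
  S.d t (fun i : Fin (t+1) => ω i) (fun i : Fin (t+1) => S.actO g ω i)

/-- Closed-loop accrued cost for the observable-cost problem. -/
def cAO (g : S.StratO) (ω : ℕ → S.W) (t : ℕ) : ℝ :=
  ∑ ℓ ∈ Finset.range t, S.γ ^ ℓ * S.ccostO g ω ℓ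

/-- Closed-loop cost-to-go for the observable-cost problem. -/
def cCinfO (g : S.StratO) (ω : ℕ → S.W) (t : ℕ) : ℝ :=
  ∑' k : ℕ, S.γ ^ k * S.ccostO g ω (t + k)

/-- Strategy value function for the observable-cost problem. -/
def VO (g : S.StratO) (t : ℕ) (m : S.MemO t) : ℝ :=
  sSup ((fun ω => S.cAO g ω t + S.γ ^ t * S.cCinfO g ω t) '' {ω | S.memOfO g ω t = m})

/-- Optimal value function for the observable-cost problem. -/
def VoptO (t : ℕ) (m : S.MemO t) : ℝ :=
  sInf ((fun g => S.VO g t m) '' {g : S.StratO | ∃ ω, S.memOfO g ω t = m})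

/-- Optimal finite-horizon function for the observable-cost problem, fuel-indexed. -/
def JoptO : ℕ → (t : ℕ) → S.MemO t → ℝ
  | 0, t, m => sInf (Set.range fun u : S.U =>
      sSup ((fun ω => S.oA ω t m.2.2 + S.γ ^ t * S.oc ω t (Fin.snoc m.2.2 u)) ''
        S.consistentO t m))
  | (n+1), t, m => sInf (Set.range fun u : S.U =>
      sSup ((fun ω => JoptO n (t+1) (S.omemO ω (t+1) (Fin.snoc m.2.2 u))) '' S.consistentO t m))

/-- `[[C_t, S̄_{t+1} | m_t, u_t]]`: conditional range of the current cost and next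
(information-) state `S̄_{t+1} = σ̄_{t+1}(M_{t+1})` given the memory `m_t` and action `u_t`. -/
def CSrange {Sb : Type*} (σ : (t : ℕ) → S.MemO t → Sb) (t : ℕ) (m : S.MemO t) (u : S.U) :
    Set (ℝ × Sb) :=
  (fun ω => (S.oc ω t (Fin.snoc m.2.2 u), σ (t+1) (S.omemO ω (t+1) (Fin.snoc m.2.2 u)))) ''
    S.consistentO t m

/-- `[[C_t, Y_{t+1} | m_t, u_t]]`. -/
def CYrange (t : ℕ) (m : S.MemO t) (u : S.U) : Set (ℝ × S.Y) :=
  (fun ω => (S.oc ω t (Fin.snoc m.2.2 u), S.oy ω (t+1) (Fin.snoc m.2.2 u))) '' S.consistentO t m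

open Classical in
/-- Conditional indicator `𝕀((c_t, m_{t+1}) | m_t, u_t)` for the observable-cost problem. -/
def indObs (t : ℕ) (c : ℝ) (m' : S.MemO (t+1)) (m : S.MemO t) (u : S.U) : EReal :=
  if ∃ ω ∈ S.consistentO t m,
      S.oc ω t (Fin.snoc m.2.2 u) = c ∧ S.omemO ω (t+1) (Fin.snoc m.2.2 u) = m' then 0 else ⊥

/-- Conditional accrued distribution `r_t((c_t, m_{t+1}) | m_t, u_t)` for the
observable-cost problem. -/
def rObs (t : ℕ) (c : ℝ) (m' : S.MemO (t+1)) (m : S.MemO t) (u : S.U) : EReal :=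
  sSup ((fun a : ℝ => (a : EReal)) '' {a | a ∈ Set.Icc 0 S.amax ∧ ∃ ω ∈ S.consistentO t m,
      S.oc ω t (Fin.snoc m.2.2 u) = c ∧ S.omemO ω (t+1) (Fin.snoc m.2.2 u) = m' ∧
      S.oA ω t m.2.2 = a}) -
  sSup ((fun a : ℝ => (a : EReal)) '' {a | a ∈ Set.Icc 0 S.amax ∧ ∃ ω ∈ S.consistentO t m,
      S.oA ω t m.2.2 = a})

end Sys

section StmtAux

open Set

/-! ### Real `sSup`/`sInf` helper lemmas -/

lemma sSup_affine_image {A : Set ℝ} (hne : A.Nonempty) (hbd : BddAbove A)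
    {a : ℝ} (ha : 0 < a) (c : ℝ) :
    sSup ((fun x => a * x + c) '' A) = a * sSup A + c := by
  apply IsLUB.csSup_eq _ (hne.image _)
  constructor
  · rintro y ⟨x, hx, rfl⟩
    have := le_csSup hbd hx
    simp only []
    nlinarith
  · intro b hb
    have h2 : ∀ x ∈ A, x ≤ (b - c) / a := by
      intro x hx
      have := hb (Set.mem_image_of_mem _ hx)
      rw [le_div_iff₀ ha]; linarith
    have h3 := csSup_le hne h2
    rw [le_div_iff₀ ha] at h3
    linarith

lemma sInf_affine_image {A : Set ℝ} (hne : A.Nonempty) (hbd : BddBelow A)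
    {a : ℝ} (ha : 0 < a) (c : ℝ) :
    sInf ((fun x => a * x + c) '' A) = a * sInf A + c := by
  apply IsGLB.csInf_eq _ (hne.image _)
  constructor
  · rintro y ⟨x, hx, rfl⟩
    have := csInf_le hbd hx
    simp only []
    nlinarith
  · intro b hb
    have h2 : ∀ x ∈ A, (b - c) / a ≤ x := by
      intro x hx
      have := hb (Set.mem_image_of_mem _ hx)
      rw [div_le_iff₀ ha]; linarith
    have h3 := le_csInf hne h2
    rw [div_le_iff₀ ha] at h3
    linarith

lemma sSup_coe_image {A : Set ℝ} (hne : A.Nonempty) (hbd : BddAbove A) :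
    sSup ((fun a : ℝ => (a : EReal)) '' A) = ((sSup A : ℝ) : EReal) := by
  have hle : sSup ((fun a : ℝ => (a : EReal)) '' A) ≤ ((sSup A : ℝ) : EReal) := by
    apply sSup_le
    rintro x ⟨a, ha, rfl⟩
    show (a : EReal) ≤ ((sSup A : ℝ) : EReal)
    exact_mod_cast le_csSup hbd ha
  refine le_antisymm hle ?_
  obtain ⟨a0, ha0⟩ := hne
  have hM1 : (a0 : EReal) ≤ sSup ((fun a : ℝ => (a : EReal)) '' A) :=
    le_sSup ⟨a0, ha0, rfl⟩
  have hbot : sSup ((fun a : ℝ => (a : EReal)) '' A) ≠ ⊥ := by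
    intro h; rw [h] at hM1; exact (EReal.coe_ne_bot a0) (le_bot_iff.mp hM1)
  have htop : sSup ((fun a : ℝ => (a : EReal)) '' A) ≠ ⊤ := by
    intro h; rw [h] at hle; exact (EReal.coe_ne_top (sSup A)) (top_le_iff.mp hle)
  rw [← EReal.coe_toReal htop hbot] at hM1 ⊢
  rw [EReal.coe_le_coe_iff]
  apply csSup_le ⟨a0, ha0⟩
  intro b hb
  have : (b : EReal) ≤ sSup ((fun a : ℝ => (a : EReal)) '' A) := le_sSup ⟨b, hb, rfl⟩
  rw [← EReal.coe_toReal htop hbot] at this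
  exact_mod_cast this

namespace Sys

variable (S : Sys)

lemma cmin_le_cmax : S.cmin ≤ S.cmax := by
  have w : S.W := Classical.arbitrary _
  have u : S.U := Classical.arbitrary _
  have h := S.hcost 0 (fun _ => w) (fun _ => u)
  exact le_trans h.1 h.2

lemma cmax_nonneg : 0 ≤ S.cmax := le_trans S.hcmin S.cmin_le_cmax

lemma one_sub_γ_pos : 0 < 1 - S.γ := by linarith [S.hγ1]

lemma amax_nonneg : 0 ≤ S.amax :=
  div_nonneg S.cmax_nonneg (le_of_lt S.one_sub_γ_pos)

lemma γpow_pos (t : ℕ) : 0 < S.γ ^ t := pow_pos S.hγ0 t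

lemma γpow_le_one (t : ℕ) : S.γ ^ t ≤ 1 := pow_le_one₀ (le_of_lt S.hγ0) (le_of_lt S.hγ1)

lemma γpow_mem (t : ℕ) : S.γ ^ t ∈ Set.Ioc (0:ℝ) 1 := ⟨S.γpow_pos t, S.γpow_le_one t⟩

lemma oc_mem (ω : ℕ → S.W) (t : ℕ) (υ : Fin (t+1) → S.U) :
    S.oc ω t υ ∈ Set.Icc S.cmin S.cmax := S.hcost t _ υ

lemma oA_nonneg (ω : ℕ → S.W) (t : ℕ) (υ : Fin t → S.U) : 0 ≤ S.oA ω t υ := by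
  apply Finset.sum_nonneg
  intro i _
  exact mul_nonneg (le_of_lt (S.γpow_pos i)) (le_trans S.hcmin (S.oc_mem ω i _).1)

lemma sum_γpow_le (t : ℕ) : ∑ ℓ ∈ Finset.range t, S.γ ^ ℓ ≤ 1 / (1 - S.γ) := by
  have hsum : Summable (fun ℓ : ℕ => S.γ ^ ℓ) :=
    summable_geometric_of_lt_one (le_of_lt S.hγ0) S.hγ1
  have h1 := Summable.sum_le_tsum (Finset.range t)
    (fun i _ => le_of_lt (S.γpow_pos i)) hsum
  rw [one_div]
  rwa [tsum_geometric_of_lt_one (le_of_lt S.hγ0) S.hγ1] at h1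

lemma oA_le_amax (ω : ℕ → S.W) (t : ℕ) (υ : Fin t → S.U) : S.oA ω t υ ≤ S.amax := by
  have h1 : S.oA ω t υ ≤ ∑ ℓ : Fin t, S.γ ^ (ℓ : ℕ) * S.cmax := by
    apply Finset.sum_le_sum
    intro i _
    exact mul_le_mul_of_nonneg_left (S.oc_mem ω i _).2 (le_of_lt (S.γpow_pos i))
  have h2 : ∑ ℓ : Fin t, S.γ ^ (ℓ : ℕ) * S.cmax ≤ S.amax := by
    rw [Fin.sum_univ_eq_sum_range (fun ℓ => S.γ ^ ℓ * S.cmax), ← Finset.sum_mul]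
    calc (∑ ℓ ∈ Finset.range t, S.γ ^ ℓ) * S.cmax
        ≤ (1 / (1 - S.γ)) * S.cmax :=
          mul_le_mul_of_nonneg_right (S.sum_γpow_le t) S.cmax_nonneg
      _ = S.amax := by rw [Sys.amax]; ring
  linarith


lemma snoc_lt_mk {α : Type*} {n : ℕ} (υ : Fin n → α) (u : α) {j : ℕ} (h : j < n)
    {h2 : j < n + 1} : Fin.snoc (α := fun _ => α) υ u ⟨j, h2⟩ = υ ⟨j, h⟩ := by
  have e : (⟨j, h2⟩ : Fin (n+1)) = Fin.castSucc ⟨j, h⟩ := rfl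
  rw [e, Fin.snoc_castSucc]

lemma omem_zero (ω : ℕ → S.W) (υ : Fin 0 → S.U) :
    S.omem ω 0 υ = S.mem0 (S.h0 (ω 0)) := by
  refine Prod.ext ?_ ?_
  · funext i
    obtain rfl := Fin.eq_zero i
    rfl
  · funext j
    exact j.elim0

lemma mem_cons0 (ω : ℕ → S.W) (y : S.Y) :
    ω ∈ S.consistent 0 (S.mem0 y) ↔ S.h0 (ω 0) = y := by
  constructor
  · intro h
    have h2 : S.omem ω 0 (S.mem0 y).2 = S.mem0 y := h
    rw [S.omem_zero ω _] at h2
    exact congrFun (congrArg Prod.fst h2) 0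
  · intro h
    show S.omem ω 0 (S.mem0 y).2 = S.mem0 y
    rw [S.omem_zero ω _, h]

lemma oA_snoc (ω : ℕ → S.W) (t : ℕ) (υ : Fin t → S.U) (u : S.U) :
    S.oA ω (t+1) (Fin.snoc υ u) = S.oA ω t υ + S.γ ^ t * S.oc ω t (Fin.snoc υ u) := by
  rw [Sys.oA, Sys.oA, Fin.sum_univ_castSucc]
  congr 1
  apply Finset.sum_congr rfl
  intro ℓ _
  congr 1
  show S.oc ω ℓ _ = S.oc ω ℓ _
  congr 1
  funext j
  exact snoc_lt_mk υ u (j := (j : ℕ))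
    (by have h2 := j.isLt; simp only [Fin.coe_castSucc] at h2; have := ℓ.isLt; omega)

lemma omem_eq_of (ω ω' : ℕ → S.W) (t : ℕ) (υ : Fin t → S.U) (u : S.U)
    (h : S.omem ω (t+1) (Fin.snoc υ u) = S.omem ω' (t+1) (Fin.snoc υ u)) :
    S.omem ω t υ = S.omem ω' t υ := by
  refine Prod.ext ?_ rfl
  funext i
  have h2 := congrFun (congrArg Prod.fst h) ⟨(i : ℕ), by omega⟩
  show S.oy ω i _ = S.oy ω' i _
  have e : ∀ (ψ : ℕ → S.W), S.oy ψ (i : ℕ)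
      (fun j : Fin (i : ℕ) => Fin.snoc (α := fun _ => S.U) υ u (⟨(j : ℕ), by omega⟩ : Fin (t+1))) =
      S.oy ψ (i : ℕ) (fun j : Fin (i : ℕ) => υ ⟨(j : ℕ), by omega⟩) := by
    intro ψ
    congr 1
    funext j
    exact snoc_lt_mk υ u (j := (j : ℕ)) (by omega)
  rw [← e ω, ← e ω']
  exact h2

lemma consistent_succ_sub {t : ℕ} {m : S.Mem t} {u : S.U} {ω ω' : ℕ → S.W}
    (hω : ω ∈ S.consistent t m)
    (hω' : ω' ∈ S.consistent (t+1) (S.omem ω (t+1) (Fin.snoc m.2 u))) :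
    ω' ∈ S.consistent t m := by
  have h2 : S.omem ω' (t+1) (Fin.snoc m.2 u) = S.omem ω (t+1) (Fin.snoc m.2 u) := hω'
  have h3 := S.omem_eq_of ω' ω t m.2 u h2
  show S.omem ω' t m.2 = m
  rw [h3]; exact hω

lemma memOf_succ (g : S.Strat) (ω : ℕ → S.W) (t : ℕ) :
    S.memOf g ω (t+1) = (Fin.snoc (α := fun _ => S.Y) (S.memOf g ω t).1
      (S.h t (fun i : Fin (t+1) => ω i)
        (Fin.snoc (α := fun _ => S.U) (S.memOf g ω t).2 (g t (S.memOf g ω t)))),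
     Fin.snoc (α := fun _ => S.U) (S.memOf g ω t).2 (g t (S.memOf g ω t))) := rfl

lemma memOf_snd (g : S.Strat) (ω : ℕ → S.W) : ∀ (t : ℕ) (i : Fin t),
    (S.memOf g ω t).2 i = S.act g ω i := by
  intro t
  induction t with
  | zero => exact fun i => i.elim0
  | succ t ih =>
    intro i
    induction i using Fin.lastCases with
    | last => simp only [memOf_succ, Fin.snoc_last]; rfl
    | cast j => simp only [memOf_succ, Fin.snoc_castSucc]; exact ih j

lemma memOf_fst_zero (g : S.Strat) (ω : ℕ → S.W) : ∀ (t : ℕ),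
    (S.memOf g ω t).1 ⟨0, Nat.succ_pos t⟩ = S.h0 (ω 0) := by
  intro t
  induction t with
  | zero => rfl
  | succ t ih =>
    rw [memOf_succ]
    show (Fin.snoc (α := fun _ => S.Y) (S.memOf g ω t).1 (S.h t (fun i : Fin (t+1) => ω i)
      (Fin.snoc (α := fun _ => S.U) (S.memOf g ω t).2 (g t (S.memOf g ω t))))) ⟨0, _⟩ = _
    rw [show (⟨0, Nat.succ_pos (t+1)⟩ : Fin (t+2)) =
      Fin.castSucc ⟨0, Nat.succ_pos t⟩ from rfl, Fin.snoc_castSucc]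
    exact ih

lemma memOf_consistent (g : S.Strat) (ω : ℕ → S.W) : ∀ (t : ℕ),
    S.omem ω t ((S.memOf g ω t).2) = S.memOf g ω t := by
  intro t
  induction t with
  | zero =>
    refine Prod.ext ?_ rfl
    funext i
    obtain rfl := Fin.eq_zero i
    rfl
  | succ t ih =>
    refine Prod.ext ?_ rfl
    funext i
    induction i using Fin.lastCases with
    | last =>
      show S.oy ω (t+1) _ = _
      conv_rhs => rw [memOf_succ]
      simp only [Fin.snoc_last]
      rfl
    | cast j =>
      have hj := congrFun (congrArg Prod.fst ih) j
      show S.oy ω (j : ℕ) _ = _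
      conv_rhs => rw [memOf_succ]
      simp only [Fin.snoc_castSucc]
      rw [← hj]
      show S.oy ω (j : ℕ) _ = S.oy ω (j : ℕ) _
      congr 1
      funext k
      show Fin.snoc (α := fun _ => S.U) (S.memOf g ω t).2 (g t (S.memOf g ω t))
        ⟨(k : ℕ), by omega⟩ = _
      exact snoc_lt_mk _ _ (j := (k : ℕ))
        (by have h2 := k.isLt; have := j.isLt;
            have e1 : ((Fin.castSucc j : Fin (t+2)) : ℕ) = (j : ℕ) := rfl
            omega)

lemma memOf_det (g : S.Strat) (ω ω' : ℕ → S.W) : ∀ (t : ℕ),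
    ω' ∈ S.consistent t (S.memOf g ω t) → S.memOf g ω' t = S.memOf g ω t := by
  intro t
  induction t with
  | zero =>
    intro h
    have h00 : S.h0 (ω' 0) = S.h0 (ω 0) :=
      congrFun (congrArg Prod.fst h) ⟨0, Nat.one_pos⟩
    exact Prod.ext (funext fun _ => h00) rfl
  | succ t ih =>
    intro h
    have h' : S.omem ω' (t+1)
        (Fin.snoc (α := fun _ => S.U) (S.memOf g ω t).2 (g t (S.memOf g ω t))) =
        S.memOf g ω (t+1) := h
    have hcons : S.omem ω (t+1)
        (Fin.snoc (α := fun _ => S.U) (S.memOf g ω t).2 (g t (S.memOf g ω t))) =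
        S.memOf g ω (t+1) := S.memOf_consistent g ω (t+1)
    have hrest := S.omem_eq_of ω' ω t ((S.memOf g ω t).2) (g t (S.memOf g ω t))
      (h'.trans hcons.symm)
    have hmem : ω' ∈ S.consistent t (S.memOf g ω t) :=
      hrest.trans (S.memOf_consistent g ω t)
    have ihm := ih hmem
    have hl := congrFun (congrArg Prod.fst h') (Fin.last (t+1))
    rw [memOf_succ] at hl
    simp only [Fin.snoc_last] at hl
    have hl2 : S.h t (fun i : Fin (t+1) => ω' i)
        (Fin.snoc (α := fun _ => S.U) (S.memOf g ω t).2 (g t (S.memOf g ω t))) =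
        S.h t (fun i : Fin (t+1) => ω i)
        (Fin.snoc (α := fun _ => S.U) (S.memOf g ω t).2 (g t (S.memOf g ω t))) := hl
    rw [memOf_succ, memOf_succ, ihm, hl2]

lemma memOf_succ_omem (g : S.Strat) (ω : ℕ → S.W) (t : ℕ) :
    S.omem ω (t+1) (Fin.snoc (α := fun _ => S.U) (S.memOf g ω t).2 (g t (S.memOf g ω t))) =
      S.memOf g ω (t+1) := S.memOf_consistent g ω (t+1)

lemma cA_eq_oA (g : S.Strat) (ω : ℕ → S.W) (t : ℕ) :
    S.cA g ω t = S.oA ω t ((S.memOf g ω t).2) := by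
  rw [Sys.cA, Sys.oA, ← Fin.sum_univ_eq_sum_range (fun ℓ => S.γ ^ ℓ * S.ccost g ω ℓ) t]
  apply Finset.sum_congr rfl
  intro ℓ _
  congr 1
  show S.ccost g ω ℓ = S.oc ω ℓ _
  rw [Sys.ccost, Sys.oc]
  congr 1
  funext j
  rw [S.memOf_snd g ω t ⟨(j : ℕ), by omega⟩]

lemma memOf0_eq (g : S.Strat) (ω : ℕ → S.W) (y : S.Y) :
    S.memOf g ω 0 = S.mem0 y ↔ S.h0 (ω 0) = y := by
  constructor
  · intro h
    exact congrFun (congrArg Prod.fst h) 0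
  · intro h
    exact Prod.ext (funext fun _ => h) rfl

lemma ccost_mem (g : S.Strat) (ω : ℕ → S.W) (t : ℕ) :
    S.ccost g ω t ∈ Set.Icc S.cmin S.cmax := S.hcost t _ _

lemma summable_cc (g : S.Strat) (ω : ℕ → S.W) (t : ℕ) :
    Summable (fun k => S.γ ^ k * S.ccost g ω (t + k)) := by
  apply Summable.of_nonneg_of_le
    (fun k => mul_nonneg (le_of_lt (S.γpow_pos k))
      (le_trans S.hcmin (S.ccost_mem g ω (t+k)).1))
    (fun k => mul_le_mul_of_nonneg_left (S.ccost_mem g ω (t+k)).2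
      (le_of_lt (S.γpow_pos k)))
  exact (summable_geometric_of_lt_one (le_of_lt S.hγ0) S.hγ1).mul_right S.cmax

lemma cCinf_nonneg (g : S.Strat) (ω : ℕ → S.W) (t : ℕ) : 0 ≤ S.cCinf g ω t :=
  tsum_nonneg (fun k => mul_nonneg (le_of_lt (S.γpow_pos k))
    (le_trans S.hcmin (S.ccost_mem g ω (t+k)).1))

lemma cCinf_le_amax (g : S.Strat) (ω : ℕ → S.W) (t : ℕ) : S.cCinf g ω t ≤ S.amax := by
  have hgeo : Summable (fun k : ℕ => S.γ ^ k) :=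
    summable_geometric_of_lt_one (le_of_lt S.hγ0) S.hγ1
  calc S.cCinf g ω t
      ≤ ∑' k : ℕ, S.γ ^ k * S.cmax := by
        apply Summable.tsum_le_tsum _ (S.summable_cc g ω t) (hgeo.mul_right S.cmax)
        intro k
        exact mul_le_mul_of_nonneg_left (S.ccost_mem g ω (t+k)).2 (le_of_lt (S.γpow_pos k))
    _ = (1 - S.γ)⁻¹ * S.cmax := by
        rw [tsum_mul_right, tsum_geometric_of_lt_one (le_of_lt S.hγ0) S.hγ1, mul_comm]
    _ = S.amax := by rw [Sys.amax, inv_mul_eq_div]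

lemma cA_split (g : S.Strat) (ω : ℕ → S.W) (n : ℕ) :
    S.cA g ω 0 + S.cCinf g ω 0 = S.cA g ω n + S.γ ^ n * S.cCinf g ω n := by
  set f : ℕ → ℝ := fun k => S.γ ^ k * S.ccost g ω k with hf
  have hs : Summable f := by
    have := S.summable_cc g ω 0
    simpa using this
  have h1 := Summable.sum_add_tsum_nat_add n hs
  have h2 : S.cCinf g ω 0 = ∑' k, f k := by
    rw [Sys.cCinf]
    exact tsum_congr (fun k => by rw [hf]; simp)
  have h3 : S.γ ^ n * S.cCinf g ω n = ∑' k, f (k + n) := by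
    rw [Sys.cCinf, ← tsum_mul_left]
    apply tsum_congr
    intro k
    rw [hf]
    show S.γ ^ n * (S.γ ^ k * S.ccost g ω (n + k)) = S.γ ^ (k + n) * S.ccost g ω (k + n)
    rw [add_comm k n, pow_add]
    ring
  have h4 : S.cA g ω 0 = 0 := by rw [Sys.cA]; simp
  have h5 : S.cA g ω n = ∑ i ∈ Finset.range n, f i := rfl
  rw [h2, h3, h4, h5, zero_add, ← h1]

end Sys


section Part2

variable (S : Sys) {Ss : Type}

/-- `Ā_t(m) = sup [[A_t | m_t]]`. -/
def SysAb (t : ℕ) (m : S.Mem t) : ℝ :=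
  sSup ((fun ω => S.oA ω t m.2) '' S.consistent t m)

/-- `Φ_t(m) = Ā_t(m) + γ^t Λ^∞(σ_t(m), γ^t)`. -/
def SysPhi (σ : (t : ℕ) → S.Mem t → Ss) (Λinf : Ss → ℝ → ℝ) (t : ℕ) (m : S.Mem t) : ℝ :=
  SysAb S t m + S.γ ^ t * Λinf (σ t m) (S.γ ^ t)

def Kset (σ : (t : ℕ) → S.Mem t → Ss) (t : ℕ) (m : S.Mem t) (u : S.U) (c : ℝ) (s : Ss) :
    Set (ℕ → S.W) :=
  {ω | ω ∈ S.consistent t m ∧ S.oc ω t (Fin.snoc m.2 u) = c ∧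
    σ (t+1) (S.omem ω (t+1) (Fin.snoc m.2 u)) = s}

lemma oA_image_bdd (t : ℕ) (m : S.Mem t) (A : Set (ℕ → S.W)) :
    BddAbove ((fun ω => S.oA ω t m.2) '' A) := by
  refine ⟨S.amax, ?_⟩
  rintro x ⟨ω, hω, rfl⟩
  exact S.oA_le_amax ω t m.2

lemma SysAb_nonneg {t : ℕ} {m : S.Mem t} (hm : (S.consistent t m).Nonempty) :
    0 ≤ SysAb S t m := by
  obtain ⟨ω, hω⟩ := hm
  exact le_trans (S.oA_nonneg ω t m.2)
    (le_csSup (oA_image_bdd S t m _) ⟨ω, hω, rfl⟩)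

lemma SysAb_le_amax {t : ℕ} {m : S.Mem t} (hm : (S.consistent t m).Nonempty) :
    SysAb S t m ≤ S.amax := by
  apply csSup_le (hm.image _)
  rintro x ⟨ω, hω, rfl⟩
  exact S.oA_le_amax ω t m.2

variable (σ : (t : ℕ) → S.Mem t → Ss) (Λinf : Ss → ℝ → ℝ) {B : ℝ}

lemma SysPhi_bounds (hB : ∀ s, ∀ z ∈ Set.Ioc (0:ℝ) 1, |Λinf s z| ≤ B)
    {t : ℕ} {m : S.Mem t} (hm : (S.consistent t m).Nonempty) :
    -B ≤ SysPhi S σ Λinf t m ∧ SysPhi S σ Λinf t m ≤ S.amax + B := by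
  have hband := hB (σ t m) (S.γ ^ t) (S.γpow_mem t)
  have hB0 : 0 ≤ B := le_trans (abs_nonneg _) hband
  have h1 : |S.γ ^ t * Λinf (σ t m) (S.γ ^ t)| ≤ B := by
    rw [abs_mul, abs_of_pos (S.γpow_pos t)]
    calc S.γ ^ t * |Λinf (σ t m) (S.γ ^ t)| ≤ 1 * B := by
          apply mul_le_mul (S.γpow_le_one t) hband (abs_nonneg _) zero_le_one
      _ = B := one_mul B
  rw [abs_le] at h1
  constructor
  · have := SysAb_nonneg S hm
    rw [SysPhi]; linarith [h1.1]
  · have := SysAb_le_amax S hm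
    rw [SysPhi]; linarith [h1.2]

lemma setD_eq (t : ℕ) (m : S.Mem t) :
    {a | a ∈ Set.Icc 0 S.amax ∧ ∃ ω ∈ S.consistent t m, S.oA ω t m.2 = a} =
      (fun ω => S.oA ω t m.2) '' S.consistent t m := by
  ext a
  constructor
  · rintro ⟨_, ω, hω, rfl⟩
    exact ⟨ω, hω, rfl⟩
  · rintro ⟨ω, hω, rfl⟩
    exact ⟨⟨S.oA_nonneg ω t m.2, S.oA_le_amax ω t m.2⟩, ω, hω, rfl⟩

lemma setN_eq (t : ℕ) (m : S.Mem t) (u : S.U) (c : ℝ) (s : Ss) :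
    {a | a ∈ Set.Icc 0 S.amax ∧ ∃ ω ∈ S.consistent t m,
        S.oc ω t (Fin.snoc m.2 u) = c ∧
        σ (t+1) (S.omem ω (t+1) (Fin.snoc m.2 u)) = s ∧ S.oA ω t m.2 = a} =
      (fun ω => S.oA ω t m.2) '' Kset S σ t m u c s := by
  ext a
  constructor
  · rintro ⟨_, ω, hω, hc, hs, rfl⟩
    exact ⟨ω, ⟨hω, hc, hs⟩, rfl⟩
  · rintro ⟨ω, ⟨hω, hc, hs⟩, rfl⟩
    exact ⟨⟨S.oA_nonneg ω t m.2, S.oA_le_amax ω t m.2⟩, ω, hω, hc, hs, rfl⟩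

variable (ρ : ℝ → Ss → Ss → S.U → EReal)
variable (hinfo : ∀ (t : ℕ) (m : S.Mem t) (u : S.U) (c : ℝ) (s : Ss),
      S.rcs σ t c s m u = ρ c s (σ t m) u)

include hinfo

lemma rho_bot {t : ℕ} {m : S.Mem t} {u : S.U} {c : ℝ} {s : Ss}
    (hK : Kset S σ t m u c s = ∅) : ρ c s (σ t m) u = ⊥ := by
  rw [← hinfo t m u c s, Sys.rcs, setN_eq S σ t m u c s, hK]
  simp only [Set.image_empty, sSup_empty]
  rw [EReal.bot_sub]

lemma rho_val {t : ℕ} {m : S.Mem t} {u : S.U} {c : ℝ} {s : Ss}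
    (hm : (S.consistent t m).Nonempty) (hK : (Kset S σ t m u c s).Nonempty) :
    ρ c s (σ t m) u =
      ((sSup ((fun ω => S.oA ω t m.2) '' Kset S σ t m u c s) - SysAb S t m : ℝ) : EReal) := by
  rw [← hinfo t m u c s, Sys.rcs, setN_eq S σ t m u c s, setD_eq S t m]
  rw [sSup_coe_image (hK.image _) (by
      obtain ⟨A, hA⟩ := oA_image_bdd S t m (S.consistent t m)
      exact ⟨A, fun x hx => hA (by
        obtain ⟨ω, hω, rfl⟩ := hx
        exact ⟨ω, hω.1, rfl⟩)⟩),
    sSup_coe_image (hm.image _) (oA_image_bdd S t m _)]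
  rw [← EReal.coe_sub]
  rfl

lemma supp_eq {t : ℕ} {m : S.Mem t} {u : S.U} (hm : (S.consistent t m).Nonempty) :
    {p : ℝ × Ss | ρ p.1 p.2 (σ t m) u ≠ ⊥} =
      (fun ω => (S.oc ω t (Fin.snoc m.2 u),
        σ (t+1) (S.omem ω (t+1) (Fin.snoc m.2 u)))) '' S.consistent t m := by
  ext p
  obtain ⟨c, s⟩ := p
  simp only [Set.mem_setOf_eq, Set.mem_image]
  constructor
  · intro hne
    by_contra hc
    push_neg at hc
    apply hne
    apply rho_bot S σ ρ hinfo
    rw [Set.eq_empty_iff_forall_notMem]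
    rintro ω ⟨hω, hoc, hσ⟩
    exact absurd (by rw [hoc, hσ] : (S.oc ω t (Fin.snoc m.2 u),
      σ (t+1) (S.omem ω (t+1) (Fin.snoc m.2 u))) = (c, s)) (fun h =>
        by have := hc ω hω; rw [h] at this; exact this rfl)
  · rintro ⟨ω, hω, hp⟩
    have hK : (Kset S σ t m u c s).Nonempty := by
      refine ⟨ω, hω, ?_, ?_⟩
      · exact congrArg Prod.fst hp
      · exact congrArg Prod.snd hp
    rw [rho_val S σ ρ hinfo hm hK]
    exact EReal.coe_ne_bot _

end Part2


section Part3

variable (S : Sys) {Ss : Type} [Nonempty Ss]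
variable (σ : (t : ℕ) → S.Mem t → Ss) (Λinf : Ss → ℝ → ℝ) {B : ℝ}
variable (ρ : ℝ → Ss → Ss → S.U → EReal)

lemma key_step
    (hinfo : ∀ (t : ℕ) (m : S.Mem t) (u : S.U) (c : ℝ) (s : Ss),
      S.rcs σ t c s m u = ρ c s (σ t m) u)
    (hB : ∀ s, ∀ z ∈ Set.Ioc (0:ℝ) 1, |Λinf s z| ≤ B)
    {t : ℕ} {m : S.Mem t} (hm : (S.consistent t m).Nonempty) (u : S.U) :
    S.γ ^ t * sSup ((fun p : ℝ × Ss => p.1 + S.γ * Λinf p.2 (S.γ * S.γ ^ t) +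
        (ρ p.1 p.2 (σ t m) u).toReal / S.γ ^ t) '' {p | ρ p.1 p.2 (σ t m) u ≠ ⊥}) =
      sSup ((fun ω => SysPhi S σ Λinf (t+1) (S.omem ω (t+1) (Fin.snoc m.2 u))) ''
        S.consistent t m) - SysAb S t m := by
  set z := S.γ ^ t with hzdef
  have hz : 0 < z := S.γpow_pos t
  have hgs : S.γ * z = S.γ ^ (t+1) := (pow_succ' S.γ t).symm
  have hB0 : 0 ≤ B := le_trans (abs_nonneg _)
    (hB (Classical.arbitrary Ss) 1 ⟨one_pos, le_refl 1⟩)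
  set F : ℝ × Ss → ℝ := fun p => p.1 + S.γ * Λinf p.2 (S.γ * z) +
      (ρ p.1 p.2 (σ t m) u).toReal / z with hF
  set supp := {p : ℝ × Ss | ρ p.1 p.2 (σ t m) u ≠ ⊥} with hsuppdef
  have hsupp : supp = (fun ω => (S.oc ω t (Fin.snoc m.2 u),
      σ (t+1) (S.omem ω (t+1) (Fin.snoc m.2 u)))) '' S.consistent t m :=
    supp_eq S σ ρ hinfo hm
  set ImG := (fun ω => SysPhi S σ Λinf (t+1) (S.omem ω (t+1) (Fin.snoc m.2 u))) ''
      S.consistent t m with hImG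
  have hreach : ∀ ω : ℕ → S.W,
      ω ∈ S.consistent (t+1) (S.omem ω (t+1) (Fin.snoc m.2 u)) := fun ω => rfl
  have hImGne : ImG.Nonempty := hm.image _
  have hImGbd : BddAbove ImG := by
    refine ⟨S.amax + B, ?_⟩
    rintro x ⟨ω, hω, rfl⟩
    exact (SysPhi_bounds S σ Λinf hB ⟨ω, hreach ω⟩).2
  have hsuppne : supp.Nonempty := by
    rw [hsupp]; exact hm.image _
  -- toReal of ρ on the support
  have hto : ∀ p ∈ supp, (ρ p.1 p.2 (σ t m) u).toReal =
      sSup ((fun ω => S.oA ω t m.2) '' Kset S σ t m u p.1 p.2) - SysAb S t m := by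
    intro p hp
    rw [hsupp] at hp
    obtain ⟨ω₀, hω₀, hpeq⟩ := hp
    have hK : (Kset S σ t m u p.1 p.2).Nonempty :=
      ⟨ω₀, hω₀, congrArg Prod.fst hpeq, congrArg Prod.snd hpeq⟩
    rw [rho_val S σ ρ hinfo hm hK, EReal.toReal_coe]
  have hKle : ∀ (c : ℝ) (s' : Ss), sSup ((fun ω => S.oA ω t m.2) '' Kset S σ t m u c s') ≤
      SysAb S t m := by
    intro c s'
    by_cases hKe : (Kset S σ t m u c s').Nonempty
    · apply csSup_le (hKe.image _)
      rintro x ⟨ω', hω', rfl⟩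
      exact le_csSup (oA_image_bdd S t m _) ⟨ω', hω'.1, rfl⟩
    · rw [Set.not_nonempty_iff_eq_empty] at hKe
      rw [hKe, Set.image_empty, Real.sSup_empty]
      exact SysAb_nonneg S hm
  have hFbd : BddAbove (F '' supp) := by
    refine ⟨S.cmax + S.γ * B, ?_⟩
    rintro x ⟨p, hp, rfl⟩
    have hc : p.1 ≤ S.cmax := by
      rw [hsupp] at hp
      obtain ⟨ω₀, hω₀, hpeq⟩ := hp
      rw [← congrArg Prod.fst hpeq]
      exact (S.oc_mem ω₀ t _).2
    have hΛ : |Λinf p.2 (S.γ * z)| ≤ B := by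
      rw [hgs]; exact hB _ _ (S.γpow_mem (t+1))
    rw [abs_le] at hΛ
    have hρ : (ρ p.1 p.2 (σ t m) u).toReal / z ≤ 0 := by
      apply div_nonpos_of_nonpos_of_nonneg _ (le_of_lt hz)
      rw [hto p hp]
      linarith [hKle p.1 p.2]
    have := S.hγ0
    rw [hF]
    simp only []
    nlinarith [hΛ.2]
  -- direction (a) : elements of ImG are below  z⬝sSup(F''supp) + Ab
  have ha : ∀ x ∈ ImG, x ≤ z * sSup (F '' supp) + SysAb S t m := by
    rintro x ⟨ω, hω, rfl⟩
    show SysAb S (t+1) _ + S.γ ^ (t+1) * Λinf _ (S.γ ^ (t+1)) ≤ _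
    rw [← hgs]
    have hAb' : SysAb S (t+1) (S.omem ω (t+1) (Fin.snoc m.2 u)) ≤
        z * sSup (F '' supp) + SysAb S t m -
          (S.γ * z) * Λinf (σ (t+1) (S.omem ω (t+1) (Fin.snoc m.2 u))) (S.γ * z) := by
      apply csSup_le (Set.Nonempty.image _ ⟨ω, hreach ω⟩)
      rintro x ⟨ω', hω', rfl⟩
      have he : (S.omem ω (t+1) (Fin.snoc m.2 u)).2 = Fin.snoc m.2 u := rfl
      rw [he]
      show S.oA ω' (t+1) (Fin.snoc m.2 u) ≤ _
      rw [S.oA_snoc ω' t m.2 u]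
      have hω'c : ω' ∈ S.consistent t m := S.consistent_succ_sub hω hω'
      have hmm : S.omem ω' (t+1) (Fin.snoc m.2 u) = S.omem ω (t+1) (Fin.snoc m.2 u) := hω'
      set p' : ℝ × Ss := (S.oc ω' t (Fin.snoc m.2 u),
        σ (t+1) (S.omem ω (t+1) (Fin.snoc m.2 u))) with hp'
      have hp'supp : p' ∈ supp := by
        rw [hsupp]
        refine ⟨ω', hω'c, ?_⟩
        show (S.oc ω' t (Fin.snoc m.2 u),
          σ (t+1) (S.omem ω' (t+1) (Fin.snoc m.2 u))) = p'
        rw [hp', hmm]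
      have hKmem : ω' ∈ Kset S σ t m u p'.1 p'.2 := ⟨hω'c, rfl, by rw [hp', hmm]⟩
      have hle1 : S.oA ω' t m.2 ≤
          sSup ((fun ω'' => S.oA ω'' t m.2) '' Kset S σ t m u p'.1 p'.2) :=
        le_csSup (oA_image_bdd S t m _) ⟨ω', hKmem, rfl⟩
      have hle2 : F p' ≤ sSup (F '' supp) := le_csSup hFbd ⟨p', hp'supp, rfl⟩
      have hzF : z * F p' = z * p'.1 + z * (S.γ * Λinf p'.2 (S.γ * z)) +
          (sSup ((fun ω'' => S.oA ω'' t m.2) '' Kset S σ t m u p'.1 p'.2) -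
            SysAb S t m) := by
        rw [hF]
        simp only []
        rw [hto p' hp'supp]
        field_simp
      have hmul : z * F p' ≤ z * sSup (F '' supp) :=
        mul_le_mul_of_nonneg_left hle2 (le_of_lt hz)
      have hfst : p'.1 = S.oc ω' t (Fin.snoc m.2 u) := rfl
      have hsnd : p'.2 = σ (t+1) (S.omem ω (t+1) (Fin.snoc m.2 u)) := rfl
      rw [← hfst]
      rw [← hsnd]
      linarith
    linarith [hAb']
  -- direction (b) : F  values are below  (sSup ImG − Ab)/z
  have hb : ∀ p ∈ supp, F p ≤ (sSup ImG - SysAb S t m) / z := by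
    intro p hp
    rw [le_div_iff₀ hz]
    have hKne : (Kset S σ t m u p.1 p.2).Nonempty := by
      rw [hsupp] at hp
      obtain ⟨ω₀, hω₀, hpeq⟩ := hp
      exact ⟨ω₀, hω₀, congrArg Prod.fst hpeq, congrArg Prod.snd hpeq⟩
    have hsupK : sSup ((fun ω => S.oA ω t m.2) '' Kset S σ t m u p.1 p.2) ≤
        sSup ImG - z * p.1 - z * (S.γ * Λinf p.2 (S.γ * z)) := by
      apply csSup_le (hKne.image _)
      rintro x ⟨ω', hω', rfl⟩
      obtain ⟨hω'c, hc, hσ⟩ := hω'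
      have h1 : S.oA ω' t m.2 + z * S.oc ω' t (Fin.snoc m.2 u) =
          S.oA ω' (t+1) (Fin.snoc m.2 u) := (S.oA_snoc ω' t m.2 u).symm
      have h2 : S.oA ω' (t+1) (Fin.snoc m.2 u) ≤
          SysAb S (t+1) (S.omem ω' (t+1) (Fin.snoc m.2 u)) :=
        le_csSup (oA_image_bdd S (t+1) _ _) ⟨ω', hreach ω', rfl⟩
      have h3 : SysPhi S σ Λinf (t+1) (S.omem ω' (t+1) (Fin.snoc m.2 u)) ≤ sSup ImG :=
        le_csSup hImGbd ⟨ω', hω'c, rfl⟩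
      have h4 : SysPhi S σ Λinf (t+1) (S.omem ω' (t+1) (Fin.snoc m.2 u)) =
          SysAb S (t+1) (S.omem ω' (t+1) (Fin.snoc m.2 u)) +
            (S.γ * z) * Λinf p.2 (S.γ * z) := by
        show SysAb S (t+1) _ + S.γ ^ (t+1) * Λinf _ (S.γ ^ (t+1)) = _
        rw [← hgs, hσ]
      rw [← hc]
      linarith
    have hzF : F p * z = z * p.1 + z * (S.γ * Λinf p.2 (S.γ * z)) +
        (sSup ((fun ω => S.oA ω t m.2) '' Kset S σ t m u p.1 p.2) - SysAb S t m) := by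
      rw [hF]
      simp only []
      rw [hto p hp]
      field_simp
    linarith
  -- combine
  apply le_antisymm
  · have h1 : sSup (F '' supp) ≤ (sSup ImG - SysAb S t m) / z := by
      apply csSup_le (hsuppne.image _)
      rintro x ⟨p, hp, rfl⟩
      exact hb p hp
    calc z * sSup (F '' supp) ≤ z * ((sSup ImG - SysAb S t m) / z) :=
          mul_le_mul_of_nonneg_left h1 (le_of_lt hz)
      _ = sSup ImG - SysAb S t m := by field_simp
  · have h2 : sSup ImG ≤ z * sSup (F '' supp) + SysAb S t m := csSup_le hImGne ha
    linarith

lemma Phi_step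
    (hinfo : ∀ (t : ℕ) (m : S.Mem t) (u : S.U) (c : ℝ) (s : Ss),
      S.rcs σ t c s m u = ρ c s (σ t m) u)
    (hB : ∀ s, ∀ z ∈ Set.Ioc (0:ℝ) 1, |Λinf s z| ≤ B)
    (hfix : ∀ s, ∀ z ∈ Set.Ioc (0:ℝ) 1, DPop S.γ ρ Λinf s z = Λinf s z)
    {t : ℕ} {m : S.Mem t} (hm : (S.consistent t m).Nonempty) :
    SysPhi S σ Λinf t m = sInf (Set.range (fun u : S.U =>
      sSup ((fun ω => SysPhi S σ Λinf (t+1) (S.omem ω (t+1) (Fin.snoc m.2 u))) ''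
        S.consistent t m))) := by
  classical
  set z := S.γ ^ t with hzdef
  have hz : 0 < z := S.γpow_pos t
  have hB0 : 0 ≤ B := le_trans (abs_nonneg _)
    (hB (Classical.arbitrary Ss) 1 ⟨one_pos, le_refl 1⟩)
  set T : S.U → ℝ := fun u =>
    sSup ((fun ω => SysPhi S σ Λinf (t+1) (S.omem ω (t+1) (Fin.snoc m.2 u))) ''
      S.consistent t m) with hT
  have hreach : ∀ (u : S.U) (ω : ℕ → S.W),
      ω ∈ S.consistent (t+1) (S.omem ω (t+1) (Fin.snoc m.2 u)) := fun u ω => rfl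
  have hTne : (Set.range T).Nonempty := Set.range_nonempty T
  have hTbdd : BddBelow (Set.range T) := by
    refine ⟨-B, ?_⟩
    rintro x ⟨u, rfl⟩
    obtain ⟨ω₀, hω₀⟩ := hm
    have hbdd : BddAbove ((fun ω => SysPhi S σ Λinf (t+1)
        (S.omem ω (t+1) (Fin.snoc m.2 u))) '' S.consistent t m) := by
      refine ⟨S.amax + B, ?_⟩
      rintro y ⟨ω, hω, rfl⟩
      exact (SysPhi_bounds S σ Λinf hB ⟨ω, hreach u ω⟩).2
    have h1 := le_csSup hbdd ⟨ω₀, hω₀, rfl⟩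
    have h2 := (SysPhi_bounds S σ Λinf hB ⟨ω₀, hreach u ω₀⟩).1
    exact le_trans h2 h1
  have hfx := hfix (σ t m) z (S.γpow_mem t)
  have hkey : ∀ u : S.U, sSup ((fun p : ℝ × Ss => p.1 + S.γ * Λinf p.2 (S.γ * z) +
      (ρ p.1 p.2 (σ t m) u).toReal / z) '' {p | ρ p.1 p.2 (σ t m) u ≠ ⊥}) =
      (1/z) * T u + (-(SysAb S t m)/z) := by
    intro u
    have h := key_step S σ Λinf ρ hinfo hB hm u
    rw [← hzdef] at h
    rw [hT]
    simp only []
    have hz' : z ≠ 0 := ne_of_gt hz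
    rw [one_div_mul_eq_div, ← add_div, eq_div_iff hz']
    linarith [h]
  have hDP : DPop S.γ ρ Λinf (σ t m) z =
      sInf (Set.range fun u : S.U => (1/z) * T u + (-(SysAb S t m)/z)) := by
    rw [DPop]
    congr 1
    exact congrArg Set.range (funext hkey)
  have hcomp : (Set.range fun u : S.U => (1/z) * T u + (-(SysAb S t m)/z)) =
      (fun x => (1/z) * x + (-(SysAb S t m)/z)) '' Set.range T := by
    rw [← Set.range_comp]
    rfl
  have hzinv : (0:ℝ) < 1/z := by positivity
  have hmain : DPop S.γ ρ Λinf (σ t m) z =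
      (1/z) * sInf (Set.range T) + (-(SysAb S t m)/z) := by
    rw [hDP, hcomp, sInf_affine_image hTne hTbdd hzinv]
  show SysAb S t m + z * Λinf (σ t m) z = _
  rw [← hfx, hmain]
  have hz' : z ≠ 0 := ne_of_gt hz
  field_simp
  ring

lemma ImG_bddAbove (hB : ∀ s, ∀ z ∈ Set.Ioc (0:ℝ) 1, |Λinf s z| ≤ B)
    {t : ℕ} {m : S.Mem t} (u : S.U) :
    BddAbove ((fun ω => SysPhi S σ Λinf (t+1) (S.omem ω (t+1) (Fin.snoc m.2 u))) ''
      S.consistent t m) := by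
  refine ⟨S.amax + B, ?_⟩
  rintro x ⟨ω, hω, rfl⟩
  exact (SysPhi_bounds S σ Λinf hB (show (S.consistent (t+1)
    (S.omem ω (t+1) (Fin.snoc m.2 u))).Nonempty from ⟨ω, rfl⟩)).2

lemma T_bddBelow (hB : ∀ s, ∀ z ∈ Set.Ioc (0:ℝ) 1, |Λinf s z| ≤ B)
    {t : ℕ} {m : S.Mem t} (hm : (S.consistent t m).Nonempty) :
    BddBelow (Set.range fun u : S.U =>
      sSup ((fun ω => SysPhi S σ Λinf (t+1) (S.omem ω (t+1) (Fin.snoc m.2 u))) ''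
        S.consistent t m)) := by
  refine ⟨-B, ?_⟩
  rintro x ⟨u, rfl⟩
  obtain ⟨ω₀, hω₀⟩ := hm
  have h1 := le_csSup (ImG_bddAbove S σ Λinf hB u) ⟨ω₀, hω₀, rfl⟩
  have h2 := (SysPhi_bounds S σ Λinf hB (⟨ω₀, rfl⟩ :
    (S.consistent (t+1) (S.omem ω₀ (t+1) (Fin.snoc m.2 u))).Nonempty)).1
  exact le_trans h2 h1

lemma Phi_le_T
    (hinfo : ∀ (t : ℕ) (m : S.Mem t) (u : S.U) (c : ℝ) (s : Ss),
      S.rcs σ t c s m u = ρ c s (σ t m) u)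
    (hB : ∀ s, ∀ z ∈ Set.Ioc (0:ℝ) 1, |Λinf s z| ≤ B)
    (hfix : ∀ s, ∀ z ∈ Set.Ioc (0:ℝ) 1, DPop S.γ ρ Λinf s z = Λinf s z)
    {t : ℕ} {m : S.Mem t} (hm : (S.consistent t m).Nonempty) (u : S.U) :
    SysPhi S σ Λinf t m ≤
      sSup ((fun ω => SysPhi S σ Λinf (t+1) (S.omem ω (t+1) (Fin.snoc m.2 u))) ''
        S.consistent t m) := by
  rw [Phi_step S σ Λinf ρ hinfo hB hfix hm]
  exact csInf_le (T_bddBelow S σ Λinf hB hm) (Set.mem_range_self u)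

lemma Phi_eps
    (hinfo : ∀ (t : ℕ) (m : S.Mem t) (u : S.U) (c : ℝ) (s : Ss),
      S.rcs σ t c s m u = ρ c s (σ t m) u)
    (hB : ∀ s, ∀ z ∈ Set.Ioc (0:ℝ) 1, |Λinf s z| ≤ B)
    (hfix : ∀ s, ∀ z ∈ Set.Ioc (0:ℝ) 1, DPop S.γ ρ Λinf s z = Λinf s z)
    {t : ℕ} {m : S.Mem t} (hm : (S.consistent t m).Nonempty) {δ : ℝ} (hδ : 0 < δ) :
    ∃ u : S.U, sSup ((fun ω => SysPhi S σ Λinf (t+1)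
        (S.omem ω (t+1) (Fin.snoc m.2 u))) '' S.consistent t m) <
      SysPhi S σ Λinf t m + δ := by
  have hstep := Phi_step S σ Λinf ρ hinfo hB hfix hm
  obtain ⟨x, ⟨u, rfl⟩, hx⟩ := Real.lt_sInf_add_pos
    (Set.range_nonempty (fun u : S.U =>
      sSup ((fun ω => SysPhi S σ Λinf (t+1) (S.omem ω (t+1) (Fin.snoc m.2 u))) ''
        S.consistent t m))) hδ
  exact ⟨u, by rw [hstep]; exact hx⟩

lemma oA_zero' (ω : ℕ → S.W) (υ : Fin 0 → S.U) : S.oA ω 0 υ = 0 := by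
  simp [Sys.oA]

lemma SysAb0 (y0 : S.Y) (hy : (S.consistent 0 (S.mem0 y0)).Nonempty) :
    SysAb S 0 (S.mem0 y0) = 0 := by
  have himg : (fun ω => S.oA ω 0 (S.mem0 y0).2) '' S.consistent 0 (S.mem0 y0) = {0} := by
    apply Set.Subset.antisymm
    · rintro x ⟨ω, hω, rfl⟩
      simp [oA_zero']
    · intro x hx
      rw [Set.mem_singleton_iff] at hx
      subst hx
      obtain ⟨ω₀, hω₀⟩ := hy
      exact ⟨ω₀, hω₀, oA_zero' S ω₀ _⟩
  show sSup ((fun ω => S.oA ω 0 (S.mem0 y0).2) '' S.consistent 0 (S.mem0 y0)) = 0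
  rw [himg, csSup_singleton]

lemma SysPhi0 (y0 : S.Y) (hy : (S.consistent 0 (S.mem0 y0)).Nonempty) :
    SysPhi S σ Λinf 0 (S.mem0 y0) = Λinf (σ 0 (S.mem0 y0)) 1 := by
  show SysAb S 0 (S.mem0 y0) + S.γ ^ 0 * Λinf (σ 0 (S.mem0 y0)) (S.γ ^ 0) = _
  rw [SysAb0 S y0 hy, pow_zero]
  ring

lemma W0_closed (y0 : S.Y) (g : S.Strat) {ω ω' : ℕ → S.W} {n : ℕ}
    (hω : ω ∈ S.consistent 0 (S.mem0 y0))
    (hω' : ω' ∈ S.consistent n (S.memOf g ω n)) :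
    ω' ∈ S.consistent 0 (S.mem0 y0) := by
  have hdet := S.memOf_det g ω ω' n hω'
  have h1 := S.memOf_fst_zero g ω' n
  have h2 := S.memOf_fst_zero g ω n
  rw [hdet, h2] at h1
  rw [S.mem_cons0] at hω ⊢
  rw [← h1, hω]

/-- `Ψ_n = sup_{ω ∈ W₀} Φ_n(M_n(ω))`. -/
def PsiF (y0 : S.Y) (g : S.Strat) (n : ℕ) : ℝ :=
  sSup ((fun ω => SysPhi S σ Λinf n (S.memOf g ω n)) '' S.consistent 0 (S.mem0 y0))

lemma PsiF_bddAbove (hB : ∀ s, ∀ z ∈ Set.Ioc (0:ℝ) 1, |Λinf s z| ≤ B)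
    (y0 : S.Y) (g : S.Strat) (n : ℕ) :
    BddAbove ((fun ω => SysPhi S σ Λinf n (S.memOf g ω n)) ''
      S.consistent 0 (S.mem0 y0)) := by
  refine ⟨S.amax + B, ?_⟩
  rintro x ⟨ω, hω, rfl⟩
  exact (SysPhi_bounds S σ Λinf hB ⟨ω, S.memOf_consistent g ω n⟩).2

lemma PsiF_zero (y0 : S.Y) (hy : (S.consistent 0 (S.mem0 y0)).Nonempty) (g : S.Strat) :
    PsiF S σ Λinf y0 g 0 = Λinf (σ 0 (S.mem0 y0)) 1 := by
  have himg : (fun ω => SysPhi S σ Λinf 0 (S.memOf g ω 0)) '' S.consistent 0 (S.mem0 y0) =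
      {SysPhi S σ Λinf 0 (S.mem0 y0)} := by
    apply Set.Subset.antisymm
    · rintro x ⟨ω, hω, rfl⟩
      rw [Set.mem_singleton_iff]
      show SysPhi S σ Λinf 0 (S.memOf g ω 0) = _
      rw [(S.memOf0_eq g ω y0).mpr ((S.mem_cons0 ω y0).mp hω)]
    · intro x hx
      rw [Set.mem_singleton_iff] at hx
      subst hx
      obtain ⟨ω₀, hω₀⟩ := hy
      exact ⟨ω₀, hω₀, by
        show SysPhi S σ Λinf 0 (S.memOf g ω₀ 0) = _
        rw [(S.memOf0_eq g ω₀ y0).mpr ((S.mem_cons0 ω₀ y0).mp hω₀)]⟩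
  rw [PsiF, himg, csSup_singleton, SysPhi0 S σ Λinf y0 hy]

lemma PsiF_mono
    (hinfo : ∀ (t : ℕ) (m : S.Mem t) (u : S.U) (c : ℝ) (s : Ss),
      S.rcs σ t c s m u = ρ c s (σ t m) u)
    (hB : ∀ s, ∀ z ∈ Set.Ioc (0:ℝ) 1, |Λinf s z| ≤ B)
    (hfix : ∀ s, ∀ z ∈ Set.Ioc (0:ℝ) 1, DPop S.γ ρ Λinf s z = Λinf s z)
    (y0 : S.Y) (hy : (S.consistent 0 (S.mem0 y0)).Nonempty) (g : S.Strat) (n : ℕ) :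
    PsiF S σ Λinf y0 g n ≤ PsiF S σ Λinf y0 g (n+1) := by
  apply csSup_le (hy.image _)
  rintro x ⟨ω, hω, rfl⟩
  have hmr : ω ∈ S.consistent n (S.memOf g ω n) := S.memOf_consistent g ω n
  have hreach : (S.consistent n (S.memOf g ω n)).Nonempty := ⟨ω, hmr⟩
  have hstep := Phi_le_T S σ Λinf ρ hinfo hB hfix hreach (g n (S.memOf g ω n))
  show SysPhi S σ Λinf n (S.memOf g ω n) ≤ _
  refine le_trans hstep (csSup_le (hreach.image _) ?_)
  rintro y ⟨ω', hω', rfl⟩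
  have hdet := S.memOf_det g ω ω' n hω'
  have h6 : S.omem ω' (n+1)
      (Fin.snoc (α := fun _ => S.U) (S.memOf g ω n).2 (g n (S.memOf g ω n))) =
      S.memOf g ω' (n+1) := by
    rw [← hdet]
    exact S.memOf_succ_omem g ω' n
  show SysPhi S σ Λinf (n+1) (S.omem ω' (n+1) (Fin.snoc (S.memOf g ω n).2
    (g n (S.memOf g ω n)))) ≤ _
  rw [h6]
  exact le_csSup (PsiF_bddAbove S σ Λinf hB y0 g (n+1))
    ⟨ω', W0_closed S y0 g hω hω', rfl⟩

lemma Vset_eq (y0 : S.Y) (g : S.Strat) :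
    {ω : ℕ → S.W | S.memOf g ω 0 = S.mem0 y0} = S.consistent 0 (S.mem0 y0) := by
  ext ω
  rw [Set.mem_setOf_eq, S.memOf0_eq g ω y0]
  exact (S.mem_cons0 ω y0).symm

lemma Vimg_bddAbove (y0 : S.Y) (g : S.Strat) :
    BddAbove ((fun ω => S.cA g ω 0 + S.γ ^ 0 * S.cCinf g ω 0) ''
      {ω : ℕ → S.W | S.memOf g ω 0 = S.mem0 y0}) := by
  refine ⟨S.amax, ?_⟩
  rintro x ⟨ω, hω, rfl⟩
  have h1 : S.cA g ω 0 = 0 := by simp [Sys.cA]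
  show S.cA g ω 0 + S.γ ^ 0 * S.cCinf g ω 0 ≤ S.amax
  rw [h1, pow_zero, one_mul, zero_add]
  exact S.cCinf_le_amax g ω 0

lemma PsiF_le_V (hB : ∀ s, ∀ z ∈ Set.Ioc (0:ℝ) 1, |Λinf s z| ≤ B)
    (y0 : S.Y) (hy : (S.consistent 0 (S.mem0 y0)).Nonempty) (g : S.Strat) (n : ℕ) :
    PsiF S σ Λinf y0 g n ≤ S.V g 0 (S.mem0 y0) + S.γ ^ n * B := by
  apply csSup_le (hy.image _)
  rintro x ⟨ω, hω, rfl⟩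
  have hmr : ω ∈ S.consistent n (S.memOf g ω n) := S.memOf_consistent g ω n
  have hΛ := hB (σ n (S.memOf g ω n)) (S.γ ^ n) (S.γpow_mem n)
  rw [abs_le] at hΛ
  have hAble : SysAb S n (S.memOf g ω n) ≤ S.V g 0 (S.mem0 y0) := by
    apply csSup_le ((Set.Nonempty.image _) ⟨ω, hmr⟩)
    rintro y ⟨ω', hω', rfl⟩
    have hdet := S.memOf_det g ω ω' n hω'
    have hy1 : S.oA ω' n ((S.memOf g ω n).2) = S.cA g ω' n := by
      rw [← hdet, ← S.cA_eq_oA]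
    show S.oA ω' n ((S.memOf g ω n).2) ≤ _
    rw [hy1]
    have hsplit := S.cA_split g ω' n
    have hω'W0 : ω' ∈ S.consistent 0 (S.mem0 y0) := W0_closed S y0 g hω hω'
    have hmem' : S.memOf g ω' 0 = S.mem0 y0 :=
      (S.memOf0_eq g ω' y0).mpr ((S.mem_cons0 ω' y0).mp hω'W0)
    have hV : S.cA g ω' 0 + S.γ ^ 0 * S.cCinf g ω' 0 ≤ S.V g 0 (S.mem0 y0) :=
      le_csSup (Vimg_bddAbove S y0 g) ⟨ω', hmem', rfl⟩
    rw [pow_zero, one_mul] at hV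
    have hnn : 0 ≤ S.γ ^ n * S.cCinf g ω' n :=
      mul_nonneg (le_of_lt (S.γpow_pos n)) (S.cCinf_nonneg g ω' n)
    linarith
  show SysAb S n (S.memOf g ω n) +
    S.γ ^ n * Λinf (σ n (S.memOf g ω n)) (S.γ ^ n) ≤ _
  have h2 : S.γ ^ n * Λinf (σ n (S.memOf g ω n)) (S.γ ^ n) ≤ S.γ ^ n * B :=
    mul_le_mul_of_nonneg_left hΛ.2 (le_of_lt (S.γpow_pos n))
  linarith

lemma V_le_PsiF (hB : ∀ s, ∀ z ∈ Set.Ioc (0:ℝ) 1, |Λinf s z| ≤ B)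
    (y0 : S.Y) (hy : (S.consistent 0 (S.mem0 y0)).Nonempty) (g : S.Strat) (n : ℕ) :
    S.V g 0 (S.mem0 y0) ≤ PsiF S σ Λinf y0 g n + S.γ ^ n * (B + S.amax) := by
  show sSup ((fun ω => S.cA g ω 0 + S.γ ^ 0 * S.cCinf g ω 0) ''
      {ω : ℕ → S.W | S.memOf g ω 0 = S.mem0 y0}) ≤ _
  rw [Vset_eq S y0 g]
  apply csSup_le (hy.image _)
  rintro x ⟨ω, hω, rfl⟩
  show S.cA g ω 0 + S.γ ^ 0 * S.cCinf g ω 0 ≤ _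
  rw [pow_zero, one_mul]
  have hsplit := S.cA_split g ω n
  have hmr : ω ∈ S.consistent n (S.memOf g ω n) := S.memOf_consistent g ω n
  have h1 : S.cA g ω n = S.oA ω n ((S.memOf g ω n).2) := S.cA_eq_oA g ω n
  have h2 : S.oA ω n ((S.memOf g ω n).2) ≤ SysAb S n (S.memOf g ω n) :=
    le_csSup (oA_image_bdd S n _ _) ⟨ω, hmr, rfl⟩
  have hΛ := hB (σ n (S.memOf g ω n)) (S.γ ^ n) (S.γpow_mem n)
  rw [abs_le] at hΛ
  have h3 : SysPhi S σ Λinf n (S.memOf g ω n) = SysAb S n (S.memOf g ω n) +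
      S.γ ^ n * Λinf (σ n (S.memOf g ω n)) (S.γ ^ n) := rfl
  have h4 : -(S.γ ^ n * B) ≤ S.γ ^ n * Λinf (σ n (S.memOf g ω n)) (S.γ ^ n) := by
    have := mul_le_mul_of_nonneg_left hΛ.1 (le_of_lt (S.γpow_pos n))
    rw [mul_neg] at this
    linarith
  have h5 : SysPhi S σ Λinf n (S.memOf g ω n) ≤ PsiF S σ Λinf y0 g n :=
    le_csSup (PsiF_bddAbove S σ Λinf hB y0 g n) ⟨ω, hω, rfl⟩
  have h7 : S.cCinf g ω n ≤ S.amax := S.cCinf_le_amax g ω n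
  have h8 : 0 < S.γ ^ n := S.γpow_pos n
  nlinarith

lemma PsiF_step_le (hB : ∀ s, ∀ z ∈ Set.Ioc (0:ℝ) 1, |Λinf s z| ≤ B)
    (y0 : S.Y) (hy : (S.consistent 0 (S.mem0 y0)).Nonempty) (g : S.Strat) (n : ℕ) {δ : ℝ}
    (hgs : ∀ m : S.Mem n, (S.consistent n m).Nonempty →
      sSup ((fun ω => SysPhi S σ Λinf (n+1)
        (S.omem ω (n+1) (Fin.snoc m.2 (g n m)))) '' S.consistent n m) ≤
      SysPhi S σ Λinf n m + δ) :
    PsiF S σ Λinf y0 g (n+1) ≤ PsiF S σ Λinf y0 g n + δ := by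
  apply csSup_le (hy.image _)
  rintro x ⟨ω, hω, rfl⟩
  have hmr : ω ∈ S.consistent n (S.memOf g ω n) := S.memOf_consistent g ω n
  have hreach : (S.consistent n (S.memOf g ω n)).Nonempty := ⟨ω, hmr⟩
  have h6 : S.memOf g ω (n+1) = S.omem ω (n+1)
      (Fin.snoc (α := fun _ => S.U) (S.memOf g ω n).2 (g n (S.memOf g ω n))) :=
    (S.memOf_succ_omem g ω n).symm
  show SysPhi S σ Λinf (n+1) (S.memOf g ω (n+1)) ≤ _
  rw [h6]
  have hle := le_csSup (ImG_bddAbove S σ Λinf hB (g n (S.memOf g ω n))) ⟨ω, hmr, rfl⟩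
  have hlt := hgs (S.memOf g ω n) hreach
  have hPsile : SysPhi S σ Λinf n (S.memOf g ω n) ≤ PsiF S σ Λinf y0 g n :=
    le_csSup (PsiF_bddAbove S σ Λinf hB y0 g n) ⟨ω, hω, rfl⟩
  calc SysPhi S σ Λinf (n+1) (S.omem ω (n+1)
      (Fin.snoc (S.memOf g ω n).2 (g n (S.memOf g ω n)))) ≤ _ := hle
    _ ≤ SysPhi S σ Λinf n (S.memOf g ω n) + δ := hlt
    _ ≤ PsiF S σ Λinf y0 g n + δ := by linarith

lemma claimA
    (hinfo : ∀ (t : ℕ) (m : S.Mem t) (u : S.U) (c : ℝ) (s : Ss),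
      S.rcs σ t c s m u = ρ c s (σ t m) u)
    (hB : ∀ s, ∀ z ∈ Set.Ioc (0:ℝ) 1, |Λinf s z| ≤ B)
    (hfix : ∀ s, ∀ z ∈ Set.Ioc (0:ℝ) 1, DPop S.γ ρ Λinf s z = Λinf s z)
    (y0 : S.Y) (hy : (S.consistent 0 (S.mem0 y0)).Nonempty) (g : S.Strat) :
    Λinf (σ 0 (S.mem0 y0)) 1 ≤ S.V g 0 (S.mem0 y0) := by
  have hB0 : 0 ≤ B := le_trans (abs_nonneg _)
    (hB (σ 0 (S.mem0 y0)) 1 ⟨one_pos, le_refl 1⟩)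
  have hchain : ∀ n, Λinf (σ 0 (S.mem0 y0)) 1 ≤ PsiF S σ Λinf y0 g n := by
    intro n
    induction n with
    | zero => rw [PsiF_zero S σ Λinf y0 hy g]
    | succ n ih => exact le_trans ih (PsiF_mono S σ Λinf ρ hinfo hB hfix y0 hy g n)
  apply le_of_forall_pos_le_add
  intro ε hε
  obtain ⟨n, hn⟩ := exists_pow_lt_of_lt_one
    (div_pos hε (by linarith : (0:ℝ) < B + 1)) S.hγ1
  have h1 := (hchain n).trans (PsiF_le_V S σ Λinf hB y0 hy g n)
  have h2 : S.γ ^ n * B < ε := by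
    have h3 : S.γ ^ n * B ≤ S.γ ^ n * (B+1) :=
      mul_le_mul_of_nonneg_left (by linarith) (le_of_lt (S.γpow_pos n))
    have h4 : S.γ ^ n * (B+1) < (ε/(B+1)) * (B+1) :=
      mul_lt_mul_of_pos_right hn (by linarith)
    rw [div_mul_cancel₀] at h4
    · linarith
    · intro hc; rw [hc] at h4; linarith
  linarith

lemma claimB
    (hinfo : ∀ (t : ℕ) (m : S.Mem t) (u : S.U) (c : ℝ) (s : Ss),
      S.rcs σ t c s m u = ρ c s (σ t m) u)
    (hB : ∀ s, ∀ z ∈ Set.Ioc (0:ℝ) 1, |Λinf s z| ≤ B)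
    (hfix : ∀ s, ∀ z ∈ Set.Ioc (0:ℝ) 1, DPop S.γ ρ Λinf s z = Λinf s z)
    (y0 : S.Y) (hy : (S.consistent 0 (S.mem0 y0)).Nonempty) {ε : ℝ} (hε : 0 < ε) :
    ∃ g : S.Strat, S.V g 0 (S.mem0 y0) ≤ Λinf (σ 0 (S.mem0 y0)) 1 + ε := by
  classical
  have hB0 : 0 ≤ B := le_trans (abs_nonneg _)
    (hB (σ 0 (S.mem0 y0)) 1 ⟨one_pos, le_refl 1⟩)
  have hδ : 0 < ε/2 * (1 - S.γ) := mul_pos (half_pos hε) S.one_sub_γ_pos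
  have hex : ∀ (t : ℕ) (m : S.Mem t), ∃ u : S.U, (S.consistent t m).Nonempty →
      sSup ((fun ω => SysPhi S σ Λinf (t+1) (S.omem ω (t+1) (Fin.snoc m.2 u))) ''
        S.consistent t m) < SysPhi S σ Λinf t m + (ε/2 * (1 - S.γ)) * S.γ ^ t := by
    intro t m
    by_cases hm : (S.consistent t m).Nonempty
    · obtain ⟨u, hu⟩ := Phi_eps S σ Λinf ρ hinfo hB hfix hm
        (mul_pos hδ (S.γpow_pos t))
      exact ⟨u, fun _ => hu⟩
    · exact ⟨Classical.arbitrary _, fun h => absurd h hm⟩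
  choose g hg using hex
  refine ⟨g, ?_⟩
  have hrec : ∀ n, PsiF S σ Λinf y0 g (n+1) ≤
      PsiF S σ Λinf y0 g n + (ε/2 * (1 - S.γ)) * S.γ ^ n :=
    fun n => PsiF_step_le S σ Λinf hB y0 hy g n (fun m hm => le_of_lt (hg n m hm))
  have hsum : ∀ n, PsiF S σ Λinf y0 g n ≤ Λinf (σ 0 (S.mem0 y0)) 1 +
      (ε/2 * (1 - S.γ)) * ∑ k ∈ Finset.range n, S.γ ^ k := by
    intro n
    induction n with
    | zero => rw [PsiF_zero S σ Λinf y0 hy g]; simp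
    | succ n ih =>
      have h1 := hrec n
      rw [Finset.sum_range_succ, mul_add]
      linarith
  have hPsiUp : ∀ n, PsiF S σ Λinf y0 g n ≤ Λinf (σ 0 (S.mem0 y0)) 1 + ε/2 := by
    intro n
    have h1 := hsum n
    have h2 : (ε/2 * (1 - S.γ)) * ∑ k ∈ Finset.range n, S.γ ^ k ≤
        (ε/2 * (1 - S.γ)) * (1/(1-S.γ)) :=
      mul_le_mul_of_nonneg_left (S.sum_γpow_le n) (le_of_lt hδ)
    have hne : (1 : ℝ) - S.γ ≠ 0 := ne_of_gt S.one_sub_γ_pos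
    have h3 : (ε/2 * (1 - S.γ)) * (1/(1-S.γ)) = ε/2 := by
      field_simp
    linarith
  have hVn : ∀ n, S.V g 0 (S.mem0 y0) ≤ Λinf (σ 0 (S.mem0 y0)) 1 + ε/2 +
      S.γ ^ n * (B + S.amax) :=
    fun n => le_trans (V_le_PsiF S σ Λinf hB y0 hy g n) (by linarith [hPsiUp n])
  have hVle : S.V g 0 (S.mem0 y0) ≤ Λinf (σ 0 (S.mem0 y0)) 1 + ε/2 := by
    apply le_of_forall_pos_le_add
    intro η hη
    have hpos : (0:ℝ) < B + S.amax + 1 := by linarith [S.amax_nonneg]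
    obtain ⟨n, hn⟩ := exists_pow_lt_of_lt_one (div_pos hη hpos) S.hγ1
    have h3 : S.γ ^ n * (B + S.amax) < η := by
      have h4 : S.γ ^ n * (B + S.amax) ≤ S.γ ^ n * (B + S.amax + 1) :=
        mul_le_mul_of_nonneg_left (by linarith) (le_of_lt (S.γpow_pos n))
      have h5 : S.γ ^ n * (B + S.amax + 1) < (η/(B + S.amax + 1)) * (B + S.amax + 1) :=
        mul_lt_mul_of_pos_right hn hpos
      rw [div_mul_cancel₀ _ (ne_of_gt hpos)] at h5
      linarith
    linarith [hVn n]
  linarith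

end Part3

end StmtAux

theorem stmt6 (S : Sys) {Ss : Type} [Nonempty Ss] [MetricSpace Ss]
    (hSb : Bornology.IsBounded (Set.univ : Set Ss))
    (σ : (t : ℕ) → S.Mem t → Ss) (ρ : ℝ → Ss → Ss → S.U → EReal)
    (hρ : ∀ c s' s u, ρ c s' s u = ⊥ ∨
      ∃ x : ℝ, ρ c s' s u = (x : EReal) ∧ x ∈ Set.Icc (-S.amax) 0)
    (hinfo : ∀ (t : ℕ) (m : S.Mem t) (u : S.U) (c : ℝ) (s : Ss),
      S.rcs σ t c s m u = ρ c s (σ t m) u)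
    (Λinf : Ss → ℝ → ℝ)
    (hbd : ∃ B, ∀ s, ∀ z ∈ Set.Ioc (0:ℝ) 1, |Λinf s z| ≤ B)
    (hfix : ∀ s, ∀ z ∈ Set.Ioc (0:ℝ) 1, DPop S.γ ρ Λinf s z = Λinf s z)
    (y0 : S.Y) (hy : (S.consistent 0 (S.mem0 y0)).Nonempty) :
    Λinf (σ 0 (S.mem0 y0)) 1 = S.Vopt 0 (S.mem0 y0) := by
  obtain ⟨B, hB⟩ := hbd
  obtain ⟨ω₀, hω₀⟩ := hy
  have hy' : (S.consistent 0 (S.mem0 y0)).Nonempty := ⟨ω₀, hω₀⟩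
  have hmem0 : ∀ g : S.Strat, S.memOf g ω₀ 0 = S.mem0 y0 := fun g =>
    (S.memOf0_eq g ω₀ y0).mpr ((S.mem_cons0 ω₀ y0).mp hω₀)
  have hVbb : BddBelow ((fun g => S.V g 0 (S.mem0 y0)) ''
      {g : S.Strat | ∃ ω, S.memOf g ω 0 = S.mem0 y0}) := by
    refine ⟨0, ?_⟩
    rintro x ⟨g, hg, rfl⟩
    show (0:ℝ) ≤ sSup ((fun ω => S.cA g ω 0 + S.γ ^ 0 * S.cCinf g ω 0) ''
      {ω : ℕ → S.W | S.memOf g ω 0 = S.mem0 y0})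
    apply Real.sSup_nonneg
    rintro y ⟨ω, hω, rfl⟩
    have h0 := S.cCinf_nonneg g ω 0
    have h1 : S.cA g ω 0 = 0 := by simp [Sys.cA]
    show (0:ℝ) ≤ S.cA g ω 0 + S.γ ^ 0 * S.cCinf g ω 0
    rw [h1, pow_zero, one_mul, zero_add]
    exact h0
  apply le_antisymm
  · apply le_csInf
    · exact ⟨S.V (fun t m => Classical.arbitrary S.U) 0 (S.mem0 y0),
        ⟨_, ⟨ω₀, hmem0 _⟩, rfl⟩⟩
    · rintro b ⟨g, hg, rfl⟩
      exact claimA S σ Λinf ρ hinfo hB hfix y0 hy' g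
  · apply le_of_forall_pos_le_add
    intro ε hε
    obtain ⟨g, hgV⟩ := claimB S σ Λinf ρ hinfo hB hfix y0 hy' hε
    have hVopt : S.Vopt 0 (S.mem0 y0) ≤ S.V g 0 (S.mem0 y0) :=
      csInf_le hVbb ⟨g, ⟨ω₀, hmem0 g⟩, rfl⟩
    linarith
end
end

section
/- The dynamic programming operator 𝒯 is a contraction with modulus γ in the supremum norm: for any two uniformly bounded functions Λ, Λ̃ : 𝒮 × (0,1] → ℝ, it holds that ‖𝒯Λ − 𝒯Λ̃‖_∞ ≤ γ·‖Λ − Λ̃‖_∞. -/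
open Set Filter

noncomputable section

lemma csSup_image_le_add' {α : Type*} {S : Set α} (hS : S.Nonempty) {f g : α → ℝ}
    (hg : BddAbove (g '' S)) {ε : ℝ} (h : ∀ x ∈ S, f x ≤ g x + ε) :
    sSup (f '' S) ≤ sSup (g '' S) + ε := by
  apply csSup_le (hS.image _)
  rintro y ⟨x, hx, rfl⟩
  exact (h x hx).trans (add_le_add_left (le_csSup hg ⟨x, hx, rfl⟩) ε)

lemma abs_csSup_image_sub' {α : Type*} {S : Set α} (hS : S.Nonempty) {f g : α → ℝ}
    (hf : BddAbove (f '' S)) (hg : BddAbove (g '' S))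
    {ε : ℝ} (h : ∀ x ∈ S, |f x - g x| ≤ ε) :
    |sSup (f '' S) - sSup (g '' S)| ≤ ε := by
  have h1 : sSup (f '' S) ≤ sSup (g '' S) + ε :=
    csSup_image_le_add' hS hg fun x hx => by
      have := (abs_sub_le_iff.mp (h x hx)).1; linarith
  have h2 : sSup (g '' S) ≤ sSup (f '' S) + ε :=
    csSup_image_le_add' hS hf fun x hx => by
      have := (abs_sub_le_iff.mp (h x hx)).2; linarith
  rw [abs_sub_le_iff]
  constructor <;> linarith

lemma csInf_range_le_add' {ι : Type*} [Nonempty ι] {f g : ι → ℝ}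
    (hf : BddBelow (Set.range f)) {ε : ℝ} (h : ∀ u, f u ≤ g u + ε) :
    sInf (Set.range f) ≤ sInf (Set.range g) + ε := by
  rw [← sub_le_iff_le_add]
  apply le_csInf (Set.range_nonempty g)
  rintro y ⟨u, rfl⟩
  rw [sub_le_iff_le_add]
  exact (csInf_le hf ⟨u, rfl⟩).trans (h u)

lemma abs_csInf_range_sub' {ι : Type*} [Nonempty ι] {f g : ι → ℝ}
    (hf : BddBelow (Set.range f)) (hg : BddBelow (Set.range g))
    {ε : ℝ} (h : ∀ u, |f u - g u| ≤ ε) :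
    |sInf (Set.range f) - sInf (Set.range g)| ≤ ε := by
  have h1 : sInf (Set.range f) ≤ sInf (Set.range g) + ε :=
    csInf_range_le_add' hf fun u => by
      have := (abs_sub_le_iff.mp (h u)).1; linarith
  have h2 : sInf (Set.range g) ≤ sInf (Set.range f) + ε :=
    csInf_range_le_add' hg fun u => by
      have := (abs_sub_le_iff.mp (h u)).2; linarith
  rw [abs_sub_le_iff]
  constructor <;> linarith

theorem stmt7 {Ss Uu : Type*} [Nonempty Ss] [Nonempty Uu]
    (γ cmin cmax : ℝ) (Cset : Set ℝ)
    (hγ0 : 0 < γ) (hγ1 : γ < 1) (hcmin : 0 ≤ cmin) (hC : Cset ⊆ Set.Icc cmin cmax)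
    (ρ : ℝ → Ss → Ss → Uu → EReal)
    (hρ : ∀ c s' s u, ρ c s' s u = ⊥ ∨
      ∃ x : ℝ, ρ c s' s u = (x : EReal) ∧ x ∈ Set.Icc (-(cmax / (1 - γ))) 0)
    (hρC : ∀ c s' s u, ρ c s' s u ≠ ⊥ → c ∈ Cset)
    (hρsup : ∀ s u, sSup {x : EReal | ∃ c s', x = ρ c s' s u} = 0)
    (Λ Λ' : Ss → ℝ → ℝ)
    (hbΛ : ∃ B, ∀ s, ∀ z ∈ Set.Ioc (0:ℝ) 1, |Λ s z| ≤ B)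
    (hbΛ' : ∃ B, ∀ s, ∀ z ∈ Set.Ioc (0:ℝ) 1, |Λ' s z| ≤ B)
    (B : ℝ) (hB0 : 0 ≤ B) (hB : ∀ s, ∀ z ∈ Set.Ioc (0:ℝ) 1, |Λ s z - Λ' s z| ≤ B) :
    ∀ s, ∀ z ∈ Set.Ioc (0:ℝ) 1, |DPop γ ρ Λ s z - DPop γ ρ Λ' s z| ≤ γ * B := by
  obtain ⟨BL, hBL⟩ := hbΛ
  obtain ⟨BL', hBL'⟩ := hbΛ'
  intro s z hz
  obtain ⟨hz0, hz1⟩ := hz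
  have hγz : γ * z ∈ Set.Ioc (0:ℝ) 1 := ⟨mul_pos hγ0 hz0, by nlinarith⟩
  -- nonemptiness of supports
  have hSne : ∀ u : Uu, {p : ℝ × Ss | ρ p.1 p.2 s u ≠ ⊥}.Nonempty := by
    intro u
    by_contra h
    rw [Set.not_nonempty_iff_eq_empty, Set.eq_empty_iff_forall_notMem] at h
    simp only [Set.mem_setOf_eq, not_not] at h
    have hset : {x : EReal | ∃ c s', x = ρ c s' s u} = {⊥} := by
      ext x
      simp only [Set.mem_setOf_eq, Set.mem_singleton_iff]
      constructor
      · rintro ⟨c, s', rfl⟩; exact h (c, s')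
      · rintro rfl
        exact ⟨0, Classical.arbitrary Ss, (h (0, Classical.arbitrary Ss)).symm⟩
    have := hρsup s u
    rw [hset, sSup_singleton] at this
    exact absurd this (by simp)
  -- pointwise bounds on the inner function
  have hbound : ∀ (L : Ss → ℝ → ℝ) (BL0 : ℝ),
      (∀ s', ∀ w ∈ Set.Ioc (0:ℝ) 1, |L s' w| ≤ BL0) →
      ∀ u : Uu, ∀ p ∈ {p : ℝ × Ss | ρ p.1 p.2 s u ≠ ⊥},
        cmin - γ * BL0 - (cmax / (1 - γ)) / z ≤
          p.1 + γ * L p.2 (γ * z) + (ρ p.1 p.2 s u).toReal / z ∧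
        p.1 + γ * L p.2 (γ * z) + (ρ p.1 p.2 s u).toReal / z ≤ cmax + γ * BL0 := by
    intro L BL0 hL u p hp
    obtain ⟨x, hx, hx1, hx2⟩ := (hρ p.1 p.2 s u).resolve_left hp
    obtain ⟨hc1, hc2⟩ := hC (hρC p.1 p.2 s u hp)
    have hLb := abs_le.mp (hL p.2 (γ * z) hγz)
    rw [hx, EReal.toReal_coe]
    have h1 : -(cmax / (1 - γ)) / z ≤ x / z := by gcongr
    have h2 : x / z ≤ 0 := by rw [div_nonpos_iff]; exact Or.inr ⟨hx2, hz0.le⟩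
    have h3 : -(γ * BL0) ≤ γ * L p.2 (γ * z) := by nlinarith [hLb.1]
    have h4 : γ * L p.2 (γ * z) ≤ γ * BL0 := by nlinarith [hLb.2]
    constructor
    · have : -(cmax / (1 - γ)) / z = -((cmax / (1 - γ)) / z) := by ring
      rw [this] at h1
      linarith
    · linarith
  rw [DPop, DPop]
  apply abs_csInf_range_sub'
  · refine ⟨cmin - γ * BL - (cmax / (1 - γ)) / z, ?_⟩
    rintro y ⟨u, rfl⟩
    obtain ⟨p, hp⟩ := hSne u
    refine le_trans ((hbound Λ BL hBL u p hp).1) (le_csSup ?_ ⟨p, hp, rfl⟩)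
    exact ⟨cmax + γ * BL, by rintro y ⟨q, hq, rfl⟩; exact (hbound Λ BL hBL u q hq).2⟩
  · refine ⟨cmin - γ * BL' - (cmax / (1 - γ)) / z, ?_⟩
    rintro y ⟨u, rfl⟩
    obtain ⟨p, hp⟩ := hSne u
    refine le_trans ((hbound Λ' BL' hBL' u p hp).1) (le_csSup ?_ ⟨p, hp, rfl⟩)
    exact ⟨cmax + γ * BL', by rintro y ⟨q, hq, rfl⟩; exact (hbound Λ' BL' hBL' u q hq).2⟩
  · intro u
    apply abs_csSup_image_sub' (hSne u)
    · exact ⟨cmax + γ * BL, by rintro y ⟨q, hq, rfl⟩; exact (hbound Λ BL hBL u q hq).2⟩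
    · exact ⟨cmax + γ * BL', by rintro y ⟨q, hq, rfl⟩; exact (hbound Λ' BL' hBL' u q hq).2⟩
    · intro p hp
      have hd : p.1 + γ * Λ p.2 (γ * z) + (ρ p.1 p.2 s u).toReal / z -
          (p.1 + γ * Λ' p.2 (γ * z) + (ρ p.1 p.2 s u).toReal / z) =
          γ * (Λ p.2 (γ * z) - Λ' p.2 (γ * z)) := by ring
      rw [hd, abs_mul, abs_of_pos hγ0]
      exact mul_le_mul_of_nonneg_left (hB p.2 (γ * z) hγz) hγ0.le
end
end

section
/- Let S_t = σ_t(M_t) be an information state with cost distribution ρ, let Λ^∞ be the unique fixed point of the operator 𝒯, and let π* be a control law attaining the infimum in [𝒯Λ^∞](s, z) for all s, z, so that 𝒯(π*)Λ^∞ = 𝒯Λ^∞ = Λ^∞. Then for all s ∈ 𝒮 and z ∈ (0,1]: lim_{n → ∞} [𝒯(π*)^n Λ^0](s, z) = Λ^∞(s, z), where Λ^0 ≡ 0. -/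
open Set Filter

noncomputable section

lemma sSup_diff_le {Ss Uu : Type*} (γ z cmax B K : ℝ) (hγ0 : 0 < γ) (hγ1 : γ < 1)
    (hz : 0 < z) (hK : 0 ≤ K)
    (ρ : ℝ → Ss → Ss → Uu → EReal) (s : Ss) (u : Uu)
    (hρ : ∀ c s' s u, ρ c s' s u = ⊥ ∨
      ∃ x : ℝ, ρ c s' s u = (x : EReal) ∧ x ∈ Set.Icc (-(cmax / (1 - γ))) 0)
    (hρc : ∀ c s', ρ c s' s u ≠ ⊥ → c ≤ cmax)
    (Λ₁ Λ₂ : Ss → ℝ → ℝ)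
    (hB : ∀ s', |Λ₂ s' (γ * z)| ≤ B)
    (hcl : ∀ s', |Λ₁ s' (γ * z) - Λ₂ s' (γ * z)| ≤ K) :
    |sSup ((fun p : ℝ × Ss => p.1 + γ * Λ₁ p.2 (γ * z) + (ρ p.1 p.2 s u).toReal / z) ''
        {p | ρ p.1 p.2 s u ≠ ⊥}) -
     sSup ((fun p : ℝ × Ss => p.1 + γ * Λ₂ p.2 (γ * z) + (ρ p.1 p.2 s u).toReal / z) ''
        {p | ρ p.1 p.2 s u ≠ ⊥})| ≤ γ * K := by
  set A : Set (ℝ × Ss) := {p | ρ p.1 p.2 s u ≠ ⊥} with hA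
  set f₁ : ℝ × Ss → ℝ := fun p => p.1 + γ * Λ₁ p.2 (γ * z) + (ρ p.1 p.2 s u).toReal / z
  set f₂ : ℝ × Ss → ℝ := fun p => p.1 + γ * Λ₂ p.2 (γ * z) + (ρ p.1 p.2 s u).toReal / z
  rcases A.eq_empty_or_nonempty with hAe | hAne
  · rw [hAe]
    simp only [Set.image_empty, Real.sSup_empty, sub_zero, abs_zero]
    positivity
  · have htoReal : ∀ p ∈ A, (ρ p.1 p.2 s u).toReal ≤ 0 := by
      intro p hp
      rcases hρ p.1 p.2 s u with h | ⟨x, hx, hxm⟩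
      · exact absurd h hp
      · rw [hx]; simpa using hxm.2
    have hpt : ∀ p ∈ A, |f₁ p - f₂ p| ≤ γ * K := by
      intro p hp
      have : f₁ p - f₂ p = γ * (Λ₁ p.2 (γ * z) - Λ₂ p.2 (γ * z)) := by
        simp only [f₁, f₂]; ring
      rw [this, abs_mul, abs_of_pos hγ0]
      exact mul_le_mul_of_nonneg_left (hcl p.2) hγ0.le
    have hbdd₂ : BddAbove (f₂ '' A) := by
      refine ⟨cmax + γ * B, ?_⟩
      rintro y ⟨p, hp, rfl⟩
      have h1 : p.1 ≤ cmax := hρc p.1 p.2 hp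
      have h2 : Λ₂ p.2 (γ * z) ≤ B := (abs_le.mp (hB p.2)).2
      have h3 : (ρ p.1 p.2 s u).toReal / z ≤ 0 :=
        div_nonpos_of_nonpos_of_nonneg (htoReal p hp) hz.le
      have : f₂ p ≤ cmax + γ * B + 0 := by
        refine add_le_add (add_le_add h1 ?_) h3
        exact mul_le_mul_of_nonneg_left h2 hγ0.le
      simpa using this
    have hbdd₁ : BddAbove (f₁ '' A) := by
      refine ⟨cmax + γ * (B + K), ?_⟩
      rintro y ⟨p, hp, rfl⟩
      have h1 : p.1 ≤ cmax := hρc p.1 p.2 hp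
      have h2 : Λ₁ p.2 (γ * z) ≤ B + K := by
        have := (abs_le.mp (hcl p.2)).2
        have := (abs_le.mp (hB p.2)).2
        linarith [(abs_le.mp (hcl p.2)).2, (abs_le.mp (hB p.2)).2]
      have h3 : (ρ p.1 p.2 s u).toReal / z ≤ 0 :=
        div_nonpos_of_nonpos_of_nonneg (htoReal p hp) hz.le
      have : f₁ p ≤ cmax + γ * (B + K) + 0 := by
        refine add_le_add (add_le_add h1 ?_) h3
        exact mul_le_mul_of_nonneg_left h2 hγ0.le
      simpa using this
    rw [abs_sub_le_iff]
    constructor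
    · rw [sub_le_iff_le_add']
      refine csSup_le (hAne.image _) ?_
      rintro y ⟨p, hp, rfl⟩
      have := (abs_le.mp (hpt p hp)).2
      have hle : f₂ p ≤ sSup (f₂ '' A) := le_csSup hbdd₂ ⟨p, hp, rfl⟩
      linarith
    · rw [sub_le_iff_le_add']
      refine csSup_le (hAne.image _) ?_
      rintro y ⟨p, hp, rfl⟩
      have := (abs_le.mp (hpt p hp)).1
      have hle : f₁ p ≤ sSup (f₁ '' A) := le_csSup hbdd₁ ⟨p, hp, rfl⟩
      linarith

theorem stmt9 {Ss Uu : Type*} [Nonempty Ss] [Nonempty Uu] [MetricSpace Ss]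
    (hSb : Bornology.IsBounded (Set.univ : Set Ss))
    (γ cmin cmax : ℝ) (Cset : Set ℝ)
    (hγ0 : 0 < γ) (hγ1 : γ < 1) (hcmin : 0 ≤ cmin) (hC : Cset ⊆ Set.Icc cmin cmax)
    (ρ : ℝ → Ss → Ss → Uu → EReal)
    (hρ : ∀ c s' s u, ρ c s' s u = ⊥ ∨
      ∃ x : ℝ, ρ c s' s u = (x : EReal) ∧ x ∈ Set.Icc (-(cmax / (1 - γ))) 0)
    (hρC : ∀ c s' s u, ρ c s' s u ≠ ⊥ → c ∈ Cset)
    (hρsup : ∀ s u, sSup {x : EReal | ∃ c s', x = ρ c s' s u} = 0)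
    (Λinf : Ss → ℝ → ℝ)
    (hbd : ∃ B, ∀ s, ∀ z ∈ Set.Ioc (0:ℝ) 1, |Λinf s z| ≤ B)
    (hfix : ∀ s, ∀ z ∈ Set.Ioc (0:ℝ) 1, DPop γ ρ Λinf s z = Λinf s z)
    (π : Ss → ℝ → Uu)
    (hπ : ∀ s, ∀ z ∈ Set.Ioc (0:ℝ) 1, DPopLaw γ ρ π Λinf s z = DPop γ ρ Λinf s z) :
    ∀ s, ∀ z ∈ Set.Ioc (0:ℝ) 1,
      Filter.Tendsto (fun n : ℕ => DPopLawIter γ ρ π n s z) Filter.atTop (nhds (Λinf s z)) := by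
  obtain ⟨B, hB⟩ := hbd
  obtain ⟨s₀⟩ := (inferInstance : Nonempty Ss)
  have hB0 : 0 ≤ B := le_trans (abs_nonneg _) (hB s₀ 1 ⟨one_pos, le_refl 1⟩)
  have key : ∀ n : ℕ, ∀ s, ∀ z ∈ Set.Ioc (0:ℝ) 1,
      |DPopLawIter γ ρ π n s z - Λinf s z| ≤ γ ^ n * B := by
    intro n
    induction n with
    | zero =>
      intro s z hz
      simpa [DPopLawIter] using hB s z hz
    | succ n ih =>
      intro s z hz
      have hγz : γ * z ∈ Set.Ioc (0:ℝ) 1 := by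
        constructor
        · exact mul_pos hγ0 hz.1
        · calc γ * z ≤ 1 * 1 := by
                apply mul_le_mul hγ1.le hz.2 hz.1.le zero_le_one
          _ = 1 := one_mul 1
      have hfixLaw : DPopLaw γ ρ π Λinf s z = Λinf s z := (hπ s z hz).trans (hfix s z hz)
      have heq : DPopLawIter γ ρ π (n+1) s z - Λinf s z =
          DPopLaw γ ρ π (DPopLawIter γ ρ π n) s z - DPopLaw γ ρ π Λinf s z := by
        rw [hfixLaw]; rfl
      rw [heq]
      have := sSup_diff_le γ z cmax B (γ ^ n * B) hγ0 hγ1 hz.1 (by positivity)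
        ρ s (π s z) hρ (fun c s' h => (hC (hρC c s' s (π s z) h)).2)
        (DPopLawIter γ ρ π n) Λinf
        (fun s' => hB s' (γ * z) hγz)
        (fun s' => ih s' (γ * z) hγz)
      calc |DPopLaw γ ρ π (DPopLawIter γ ρ π n) s z - DPopLaw γ ρ π Λinf s z|
          ≤ γ * (γ ^ n * B) := this
        _ = γ ^ (n+1) * B := by ring
  intro s z hz
  have h0 : Filter.Tendsto (fun n : ℕ => γ ^ n * B) Filter.atTop (nhds 0) := by
    simpa using (tendsto_pow_atTop_nhds_zero_of_lt_one hγ0.le hγ1).mul_const B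
  have hsq : Filter.Tendsto (fun n : ℕ => DPopLawIter γ ρ π n s z - Λinf s z)
      Filter.atTop (nhds 0) :=
    squeeze_zero_norm (fun n => key n s z hz) h0
  have := hsq.add_const (Λinf s z)
  simpa using this
end
end
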